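/- arXiv:1806.03877 — 8 statements merged into one kernel-verified Lean document; each statement's English description precedes it below -/
import Mathlib

section
/- Let q ∈ L^1 be supported in Ω = [-T_-,T_+] and let b(ζ) be the scattering coefficient of the Zakharov–Shabat problem with potential q and r = -q*. Then |b(ζ)| ≤ sinh(κ) e^{2T_+ Im ζ} for ζ in the closed upper half-plane, and |b(ζ)| ≤ sinh(κ) e^{-2T_- Im ζ} for ζ in the open lower half-plane, where κ = ‖q‖_{L^1(Ω)}. -/
/-!
Removing the oscillating factors, the Jost solution `(A, B)` obeys the Volterra inequalities
`‖A t‖ ≤ 1 + ∫ ‖q‖ ‖B‖ e^{-2 Im ζ s}` and `‖B t‖ ≤ ∫ ‖q‖ ‖A‖ e^{2 Im ζ s}`. Multiplying by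
exponential weights adapted to the sign of `Im ζ` turns them into `u ≤ 1 + ∫ Q v`, `v ≤ ∫ Q u`
with `Q = ‖q‖`, whose extremal solution is `(cosh K, sinh K)`, `K` the primitive of `Q`.
The comparison `v ≤ sinh K` follows from Grönwall's inequality (with zero forcing term) applied to
`max (u - cosh K) (v - sinh K)`; the identities `cosh K = 1 + ∫ Q sinh K` and
`sinh K = ∫ Q cosh K` hold because `K` is absolutely continuous.
-/

open MeasureTheory Set Filter Complex

theorem LipschitzOnWith.comp_absolutelyContinuousOnInterval {X Y : Type*} [PseudoMetricSpace X]
    [PseudoMetricSpace Y] {G : X → Y} {f : ℝ → X} {s : Set X} {L : NNReal} {a b : ℝ}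
    (hG : LipschitzOnWith L G s) (hf : AbsolutelyContinuousOnInterval f a b)
    (hfs : MapsTo f (uIcc a b) s) : AbsolutelyContinuousOnInterval (G ∘ f) a b := by
  refine squeeze_zero' (Eventually.of_forall fun _ => Finset.sum_nonneg fun _ _ => dist_nonneg)
    ?_ (by simpa using Tendsto.const_mul (L : ℝ) hf)
  filter_upwards [eventually_inf_principal.mpr (Eventually.of_forall fun E hE => hE)] with E hE
  rw [Finset.mul_sum]
  exact Finset.sum_le_sum fun i hi => hG.dist_le_mul _ (hfs (hE.1 i hi).1) _ (hfs (hE.1 i hi).2)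

theorem ContDiff.comp_absolutelyContinuousOnInterval {G f : ℝ → ℝ} {a b : ℝ}
    (hG : ContDiff ℝ 1 G) (hf : AbsolutelyContinuousOnInterval f a b) :
    AbsolutelyContinuousOnInterval (G ∘ f) a b := by
  have hcpt : IsCompact (f '' uIcc a b) := isCompact_uIcc.image_of_continuousOn hf.continuousOn
  obtain ⟨L, hL⟩ := hG.locallyLipschitz.locallyLipschitzOn.exists_lipschitzOnWith_of_compact hcpt
  exact hL.comp_absolutelyContinuousOnInterval hf (mapsTo_image f _)

namespace intervalIntegral

variable {Q : ℝ → ℝ} {a b : ℝ}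

theorem integral_deriv_comp_primitive_mul {G : ℝ → ℝ} (hG : ContDiff ℝ 1 G)
    (hQ : IntervalIntegrable Q volume a b) :
    ∫ s in a..b, deriv G (∫ x in a..s, Q x) * Q s = G (∫ x in a..b, Q x) - G 0 := by
  have hK := hQ.absolutelyContinuousOnInterval_intervalIntegral left_mem_uIcc
  have hFTC := (hG.comp_absolutelyContinuousOnInterval hK).integral_deriv_eq_sub
  simp only [Function.comp_apply, integral_same] at hFTC
  rw [← hFTC]
  refine integral_congr_ae ?_
  filter_upwards [hQ.ae_hasDerivAt_integral] with s hs hsab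
  have hKs := hs (uIoc_subset_uIcc hsab) a left_mem_uIcc
  exact ((hG.differentiable one_ne_zero _).hasDerivAt.comp s hKs).deriv.symm

theorem integral_mul_primitive_pow (hQ : IntervalIntegrable Q volume a b) (n : ℕ) :
    ∫ s in a..b, Q s * (∫ x in a..s, Q x) ^ n = (∫ x in a..b, Q x) ^ (n + 1) / (n + 1) := by
  have h := integral_deriv_comp_primitive_mul (contDiff_id.pow (n + 1)) hQ
  simp only [id, deriv_pow_field, zero_pow n.succ_ne_zero, sub_zero] at h
  rw [← h, ← integral_div]
  refine integral_congr fun s _ => ?_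
  simp only [Nat.add_sub_cancel]
  push_cast
  field_simp

theorem cosh_primitive_eq (hQ : IntervalIntegrable Q volume a b) :
    Real.cosh (∫ x in a..b, Q x) = 1 + ∫ s in a..b, Q s * Real.sinh (∫ x in a..s, Q x) := by
  have h := integral_deriv_comp_primitive_mul Real.contDiff_cosh hQ
  simp only [Real.deriv_cosh, Real.cosh_zero] at h
  simp only [mul_comm (Q _), h]
  ring

theorem sinh_primitive_eq (hQ : IntervalIntegrable Q volume a b) :
    Real.sinh (∫ x in a..b, Q x) = ∫ s in a..b, Q s * Real.cosh (∫ x in a..s, Q x) := by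
  have h := integral_deriv_comp_primitive_mul Real.contDiff_sinh hQ
  simp only [Real.deriv_sinh, Real.sinh_zero, sub_zero] at h
  simp only [mul_comm (Q _), h]

end intervalIntegral

section Volterra

variable {Q : ℝ → ℝ} {a b : ℝ}

theorem IntervalIntegrable.mono_set_of_mem_Icc {E : Type*} [NormedAddCommGroup E] {f : ℝ → E}
    (hf : IntervalIntegrable f volume a b) {t : ℝ} (ht : t ∈ Icc a b) :
    IntervalIntegrable f volume a t :=
  hf.mono_set (uIcc_subset_uIcc left_mem_uIcc (Icc_subset_uIcc ht))

theorem IntervalIntegrable.mul_continuousOn_of_mem_Icc {f : ℝ → ℝ}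
    (hQ : IntervalIntegrable Q volume a b) (hf : ContinuousOn f (Icc a b)) {t : ℝ}
    (ht : t ∈ Icc a b) : IntervalIntegrable (fun s => Q s * f s) volume a t := by
  have hsub : uIcc a t ⊆ Icc a b := by
    rw [uIcc_of_le ht.1]
    exact Icc_subset_Icc_right ht.2
  exact (hQ.mono_set_of_mem_Icc ht).mul_continuousOn (hf.mono hsub)

theorem le_zero_of_le_integral_mul {w : ℝ → ℝ} (hQ0 : ∀ s, 0 ≤ Q s)
    (hQ : IntervalIntegrable Q volume a b) (hw : ContinuousOn w (Icc a b))
    (hle : ∀ t ∈ Icc a b, w t ≤ ∫ s in a..t, Q s * w s) :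
    ∀ t ∈ Icc a b, w t ≤ 0 := by
  set K : ℝ → ℝ := fun t => ∫ x in a..t, Q x with hK_def
  have hK : ContinuousOn K (Icc a b) :=
    (intervalIntegral.continuousOn_primitive_interval' hQ left_mem_uIcc).mono Icc_subset_uIcc
  obtain ⟨M, hM⟩ := isCompact_Icc.bddAbove_image hw
  have hbound : ∀ n : ℕ, ∀ t ∈ Icc a b, w t ≤ M * K t ^ n / n.factorial := by
    intro n
    induction n with
    | zero => simpa using fun t ht => hM (mem_image_of_mem w ht)
    | succ n ih =>
      intro t ht
      calc w t ≤ ∫ s in a..t, Q s * w s := hle t ht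
        _ ≤ ∫ s in a..t, Q s * (M * K s ^ n / n.factorial) :=
          intervalIntegral.integral_mono_on ht.1 (hQ.mul_continuousOn_of_mem_Icc hw ht)
            (hQ.mul_continuousOn_of_mem_Icc (by fun_prop) ht) fun s hs =>
            mul_le_mul_of_nonneg_left (ih s ⟨hs.1, hs.2.trans ht.2⟩) (hQ0 s)
        _ = M / n.factorial * ∫ s in a..t, Q s * K s ^ n := by
          rw [← intervalIntegral.integral_const_mul]
          congr 1; ext s; ring
        _ = M * K t ^ (n + 1) / (n + 1).factorial := by
          rw [hK_def, intervalIntegral.integral_mul_primitive_pow (hQ.mono_set_of_mem_Icc ht),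
            Nat.factorial_succ]
          push_cast
          field_simp
  intro t ht
  have hlim : Tendsto (fun n : ℕ => M * K t ^ n / n.factorial) atTop (nhds 0) := by
    simpa [mul_div_assoc] using (FloorSemiring.tendsto_pow_div_factorial_atTop (K t)).const_mul M
  exact ge_of_tendsto' hlim fun n => hbound n t ht

theorem le_sinh_of_le_integral_mul {u v : ℝ → ℝ} (hQ0 : ∀ s, 0 ≤ Q s)
    (hQ : IntervalIntegrable Q volume a b) (hu : ContinuousOn u (Icc a b))
    (hv : ContinuousOn v (Icc a b)) (hu_le : ∀ t ∈ Icc a b, u t ≤ 1 + ∫ s in a..t, Q s * v s)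
    (hv_le : ∀ t ∈ Icc a b, v t ≤ ∫ s in a..t, Q s * u s) :
    ∀ t ∈ Icc a b, v t ≤ Real.sinh (∫ x in a..t, Q x) := by
  set K : ℝ → ℝ := fun t => ∫ x in a..t, Q x
  have hK : ContinuousOn K (Icc a b) :=
    (intervalIntegral.continuousOn_primitive_interval' hQ left_mem_uIcc).mono Icc_subset_uIcc
  set w : ℝ → ℝ := fun t => max (u t - Real.cosh (K t)) (v t - Real.sinh (K t))
  have hw : ContinuousOn w (Icc a b) := by fun_prop
  have hint : ∀ {f : ℝ → ℝ}, ContinuousOn f (Icc a b) → ∀ t ∈ Icc a b,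
      IntervalIntegrable (fun s => Q s * f s) volume a t :=
    fun hf _ ht => hQ.mul_continuousOn_of_mem_Icc hf ht
  have hsub_le : ∀ {f g : ℝ → ℝ}, ContinuousOn f (Icc a b) → ContinuousOn g (Icc a b) →
      (∀ s, f s - g s ≤ w s) → ∀ t ∈ Icc a b,
      (∫ s in a..t, Q s * f s) - ∫ s in a..t, Q s * g s ≤ ∫ s in a..t, Q s * w s := by
    intro f g hf hg hfgw t ht
    rw [← intervalIntegral.integral_sub (hint hf t ht) (hint hg t ht)]
    refine intervalIntegral.integral_mono_on ht.1 ((hint hf t ht).sub (hint hg t ht))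
      (hint hw t ht) fun s _ => ?_
    rw [← mul_sub]
    exact mul_le_mul_of_nonneg_left (hfgw s) (hQ0 s)
  have hw_le : ∀ t ∈ Icc a b, w t ≤ ∫ s in a..t, Q s * w s := by
    intro t ht
    have hcosh := intervalIntegral.cosh_primitive_eq (hQ.mono_set_of_mem_Icc ht)
    have hsinh := intervalIntegral.sinh_primitive_eq (hQ.mono_set_of_mem_Icc ht)
    refine max_le ?_ ?_
    · linarith [hu_le t ht, hsub_le hv (by fun_prop) (fun s => le_max_right _ _) t ht]
    · linarith [hv_le t ht, hsub_le hu (by fun_prop) (fun s => le_max_left _ _) t ht]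
  intro t ht
  linarith [le_zero_of_le_integral_mul hQ0 hQ hw hw_le t ht,
    le_max_right (u t - Real.cosh (K t)) (v t - Real.sinh (K t))]

end Volterra

section ZakharovShabat

theorem norm_le_norm_add_integral_norm_of_hasDerivAt {E : Type*} [NormedAddCommGroup E]
    [NormedSpace ℝ E] [CompleteSpace E] {F f : ℝ → E} {a t : ℝ} (hat : a ≤ t)
    (hF : ∀ s ∈ uIcc a t, HasDerivAt F (f s) s) (hf : IntervalIntegrable f volume a t) :
    ‖F t‖ ≤ ‖F a‖ + ∫ s in a..t, ‖f s‖ := by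
  rw [← sub_add_cancel (F t) (F a), ← intervalIntegral.integral_eq_sub_of_hasDerivAt hF hf]
  exact (norm_add_le _ _).trans
    (by rw [add_comm]; gcongr; exact intervalIntegral.norm_integral_le_integral_norm hat)

theorem norm_mul_exp_le_of_hasDerivAt_mul_mul_exp {F G p : ℝ → ℂ} {Q β : ℝ → ℝ} {c : ℂ}
    {α a t : ℝ} (hat : a ≤ t) (hF : ∀ s, HasDerivAt F (p s * G s * exp (c * s)) s)
    (hp : IntervalIntegrable p volume a t) (hQ : IntervalIntegrable Q volume a t)
    (hpQ : ∀ s, ‖p s‖ ≤ Q s) (hG : Continuous G) (hβ : Continuous β)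
    (hcβ : ∀ s ∈ Icc a t, c.re * s + α ≤ β s) :
    ‖F t‖ * Real.exp α ≤ ‖F a‖ * Real.exp α + ∫ s in a..t, Q s * (‖G s‖ * Real.exp (β s)) := by
  have hint : IntervalIntegrable (fun s : ℝ => p s * G s * exp (c * s)) volume a t := by
    simpa only [mul_assoc] using hp.mul_continuousOn (g := fun s : ℝ => G s * exp (c * s))
      (by fun_prop)
  have hle := norm_le_norm_add_integral_norm_of_hasDerivAt hat (fun s _ => hF s) hint
  calc ‖F t‖ * Real.exp α
      ≤ (‖F a‖ + ∫ s in a..t, ‖p s * G s * exp (c * s)‖) * Real.exp α := by gcongr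
    _ = ‖F a‖ * Real.exp α + ∫ s in a..t, ‖p s‖ * (‖G s‖ * Real.exp (c.re * s + α)) := by
      rw [add_mul, ← intervalIntegral.integral_mul_const]
      congr 2; ext s
      simp only [norm_mul, norm_exp, Real.exp_add, mul_re, ofReal_re, ofReal_im]
      ring_nf
    _ ≤ ‖F a‖ * Real.exp α + ∫ s in a..t, Q s * (‖G s‖ * Real.exp (β s)) := by
      gcongr ‖F a‖ * Real.exp α + ?_
      refine intervalIntegral.integral_mono_on hat ?_ ?_ fun s hs => ?_
      · exact hp.norm.mul_continuousOn (by fun_prop)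
      · exact hQ.mul_continuousOn (by fun_prop)
      · gcongr
        · exact (norm_nonneg _).trans (hpQ s)
        · exact hpQ s
        · exact hcβ s hs

theorem norm_le_sinh_mul_exp_of_zakharovShabat {q r A B : ℝ → ℂ} {ζ : ℂ} {a b μ ν : ℝ}
    (hab : a ≤ b) (hq : IntervalIntegrable q volume a b) (hr : IntervalIntegrable r volume a b)
    (hrq : ∀ s, ‖r s‖ ≤ ‖q s‖)
    (hA : ∀ t, HasDerivAt A (q t * B t * exp (2 * I * ζ * t)) t)
    (hB : ∀ t, HasDerivAt B (r t * A t * exp (-(2 * I * ζ * t))) t)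
    (hA0 : A a = 1) (hB0 : B a = 0) (hμ : μ ≤ 0) (hν : 0 ≤ ν) (hμν : μ + ν = ζ.im) :
    ‖B b‖ ≤ Real.sinh (∫ s in a..b, ‖q s‖) * Real.exp (2 * ν * b + 2 * μ * a) := by
  have hAc : Continuous A := continuous_iff_continuousAt.2 fun t => (hA t).continuousAt
  have hBc : Continuous B := continuous_iff_continuousAt.2 fun t => (hB t).continuousAt
  have hre : (2 * I * ζ).re = -(2 * (μ + ν)) := by simp [hμν]
  -- For `a ≤ s ≤ t` these weights absorb the factors `e^{∓2 Im ζ s}`, since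
  -- `e^{2μ(t - s)} ≤ 1` and `e^{2ν(s - t)} ≤ 1`.
  set u : ℝ → ℝ := fun s => ‖A s‖ * Real.exp (2 * μ * (s - a))
  set v : ℝ → ℝ := fun s => ‖B s‖ * Real.exp (-(2 * ν * s + 2 * μ * a))
  have hu_le : ∀ t ∈ Icc a b, u t ≤ 1 + ∫ s in a..t, ‖q s‖ * v s := by
    intro t ht
    have h := norm_mul_exp_le_of_hasDerivAt_mul_mul_exp (α := 2 * μ * (t - a))
      (β := fun s => -(2 * ν * s + 2 * μ * a)) ht.1 hA (hq.mono_set_of_mem_Icc ht)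
      (hq.norm.mono_set_of_mem_Icc ht) (fun s => le_rfl) hBc (by fun_prop) fun s hs => by
        rw [hre]
        nlinarith [mul_le_mul_of_nonpos_left hs.2 hμ]
    rw [hA0, norm_one, one_mul] at h
    exact h.trans (by gcongr; exact Real.exp_le_one_iff.2 (by nlinarith [ht.1]))
  have hv_le : ∀ t ∈ Icc a b, v t ≤ ∫ s in a..t, ‖q s‖ * u s := by
    intro t ht
    have h := norm_mul_exp_le_of_hasDerivAt_mul_mul_exp (c := -(2 * I * ζ))
      (α := -(2 * ν * t + 2 * μ * a)) (β := fun s => 2 * μ * (s - a)) ht.1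
      (by simpa only [neg_mul] using hB) (hr.mono_set_of_mem_Icc ht)
      (hq.norm.mono_set_of_mem_Icc ht) hrq hAc (by fun_prop) fun s hs => by
        rw [neg_re, hre]
        nlinarith [mul_le_mul_of_nonneg_left hs.2 hν]
    rwa [hB0, norm_zero, zero_mul, zero_add] at h
  have hvb := le_sinh_of_le_integral_mul (fun s => norm_nonneg (q s)) hq.norm (by fun_prop)
    (by fun_prop) hu_le hv_le b ⟨hab, le_rfl⟩
  calc ‖B b‖ = v b * Real.exp (2 * ν * b + 2 * μ * a) := by
        simp only [v, mul_assoc, ← Real.exp_add, neg_add_cancel, Real.exp_zero, mul_one]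
    _ ≤ _ := by gcongr

end ZakharovShabat

theorem b_coefficient_exponential_bound_general
    (Tm Tp : ℝ) (hTm : 0 ≤ Tm) (hTp : 0 ≤ Tp)
    (q : ℝ → ℂ) (hq : Integrable q)
    (r : ℝ → ℂ) (hr : ∀ t, r t = -(starRingEnd ℂ) (q t))
    (ζ : ℂ)
    (A B : ℝ → ℂ)
    (hA : ∀ t, HasDerivAt A (q t * B t * Complex.exp (2 * Complex.I * ζ * t)) t)
    (hB : ∀ t, HasDerivAt B (r t * A t * Complex.exp (-(2 * Complex.I * ζ * t))) t)
    (hA0 : A (-Tm) = 1) (hB0 : B (-Tm) = 0)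
    (b : ℂ) (hb : b = B Tp)
    (κ : ℝ) (hκ : κ = ∫ t in Icc (-Tm) Tp, ‖q t‖) :
    (0 ≤ ζ.im → ‖b‖ ≤ Real.sinh κ * Real.exp (2 * Tp * ζ.im))
    ∧ (ζ.im < 0 → ‖b‖ ≤ Real.sinh κ * Real.exp (-(2 * Tm * ζ.im))) := by
  have hTmp : -Tm ≤ Tp := by linarith
  have hr_int : Integrable r := by
    rw [funext hr]
    exact (conjCLE.toContinuousLinearMap.integrable_comp hq).neg
  have hκ' : κ = ∫ t in -Tm..Tp, ‖q t‖ := by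
    rw [hκ, intervalIntegral.integral_of_le hTmp, integral_Icc_eq_integral_Ioc]
  have hbound : ∀ {μ ν : ℝ}, μ ≤ 0 → 0 ≤ ν → μ + ν = ζ.im →
      ‖B Tp‖ ≤ Real.sinh (∫ t in -Tm..Tp, ‖q t‖) * Real.exp (2 * ν * Tp + 2 * μ * -Tm) :=
    norm_le_sinh_mul_exp_of_zakharovShabat hTmp hq.intervalIntegrable hr_int.intervalIntegrable
      (fun s => by simp [hr]) hA hB hA0 hB0
  rw [hb, hκ']
  constructor
  · intro him
    convert hbound le_rfl him (zero_add _) using 3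
    ring
  · intro him
    convert hbound him.le le_rfl (add_zero _) using 3
    ring

/-- For `q ∈ L¹` supported in `Ω = [-T₋,T₊]`, the Zakharov–Shabat
scattering coefficient `b(ζ)` (read off from the Jost solution
`φ = (A e^{-iζt}, B e^{iζt})` with `A(-T₋)=1`, `B(-T₋)=0`, `b(ζ) = B(T₊)`)
satisfies `|b(ζ)| ≤ sinh(κ) e^{2T₊ Im ζ}` for `Im ζ ≥ 0` and
`|b(ζ)| ≤ sinh(κ) e^{-2T₋ Im ζ}` for `Im ζ < 0`, where `κ = ‖q‖_{L¹(Ω)}`. -/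
theorem b_coefficient_exponential_bound
    (Tm Tp : ℝ) (hTm : 0 ≤ Tm) (hTp : 0 ≤ Tp)
    (q : ℝ → ℂ) (hq : Integrable q)
    (hsupp : Function.support q ⊆ Icc (-Tm) Tp)
    (r : ℝ → ℂ) (hr : ∀ t, r t = -(starRingEnd ℂ) (q t))
    (ζ : ℂ)
    (A B : ℝ → ℂ)
    (hA : ∀ t, HasDerivAt A (q t * B t * Complex.exp (2 * Complex.I * ζ * t)) t)
    (hB : ∀ t, HasDerivAt B (r t * A t * Complex.exp (-(2 * Complex.I * ζ * t))) t)
    (hA0 : A (-Tm) = 1) (hB0 : B (-Tm) = 0)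
    (b : ℂ) (hb : b = B Tp)
    (κ : ℝ) (hκ : κ = ∫ t in Icc (-Tm) Tp, ‖q t‖) :
    (0 ≤ ζ.im → ‖b‖ ≤ Real.sinh κ * Real.exp (2 * Tp * ζ.im))
    ∧ (ζ.im < 0 → ‖b‖ ≤ Real.sinh κ * Real.exp (-(2 * Tm * ζ.im))) :=
  b_coefficient_exponential_bound_general Tm Tp hTm hTp q hq r hr ζ A B hA hB hA0 hB0 b hb κ hκ
end

section
/- Let q ∈ L^1 be supported in Ω = [-T_-,T_+] with scattering coefficients a(ζ), b(ζ) of the Zakharov–Shabat problem (r = -q*). Then the function ã(ζ) = [a(ζ)-1]e^{-2iζT_+} satisfies |ã(ζ)| ≤ [cosh(κ)-1] e^{2T_+ Im ζ} for Im ζ ≥ 0 and |ã(ζ)| ≤ [cosh(κ)-1] e^{-2T_- Im ζ} for Im ζ < 0, where κ = ‖q‖_{L^1(Ω)}. -/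
/-!
The amplitudes of the Jost solution solve the Volterra system
`A t - 1 = ∫ q B e^{2iζs}`, `B t = ∫ r A e^{-2iζs}` on `[-T₋, t]`. Taking norms, and moving the
factor `e^{±2 Im ζ s}` into an exponential weight adapted to the sign of `Im ζ`, turns `(‖A‖, ‖B‖)`
into a subsolution of `u ≤ 1 + ∫ ‖q‖ v`, `v ≤ ∫ ‖q‖ u`, whose exact solution is `(cosh K, sinh K)`
with `K` the primitive of `‖q‖`. The comparison is a Grönwall argument, which needs the chain rule
for the absolutely continuous function `K`. Then `‖a - 1‖ ≤ ∫ ‖q‖ sinh K = cosh κ - 1`, up to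
the weight.
-/

open MeasureTheory Set Filter
open scoped Nat

namespace AbsolutelyContinuousOnInterval

variable {X : Type*} [PseudoMetricSpace X] {a b : ℝ}

theorem comp_locallyLipschitz {F : ℝ → X} {f : ℝ → ℝ} (hF : LocallyLipschitz F)
    (hf : AbsolutelyContinuousOnInterval f a b) :
    AbsolutelyContinuousOnInterval (F ∘ f) a b := by
  obtain ⟨L, hL⟩ := (hF.locallyLipschitzOn (s := f '' uIcc a b)).exists_lipschitzOnWith_of_compact
    (isCompact_uIcc.image_of_continuousOn hf.continuousOn)
  unfold AbsolutelyContinuousOnInterval at hf ⊢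
  apply squeeze_zero' (Eventually.of_forall fun _ ↦ Finset.sum_nonneg fun _ _ ↦ dist_nonneg)
    _ (by simpa using hf.const_mul (L : ℝ))
  rw [eventually_inf_principal]
  filter_upwards with (n, I) hnI
  simp only [disjWithin, mem_ofPred_eq] at hnI
  rw [Finset.mul_sum]
  gcongr with i hi
  exact hL.dist_le_mul _ (mem_image_of_mem f (hnI.1 i hi).1) _ (mem_image_of_mem f (hnI.1 i hi).2)

theorem integral_deriv_comp_mul_deriv {F f : ℝ → ℝ} (hF : ContDiff ℝ 1 F)
    (hf : AbsolutelyContinuousOnInterval f a b) :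
    ∫ x in a..b, deriv F (f x) * deriv f x = F (f b) - F (f a) := by
  have hFTC := (hf.comp_locallyLipschitz hF.locallyLipschitz).integral_deriv_eq_sub
  rw [Function.comp_apply, Function.comp_apply] at hFTC
  rw [← hFTC]
  refine intervalIntegral.integral_congr_ae ?_
  filter_upwards [hf.ae_differentiableAt] with x hx hxab
  exact (deriv_comp x (hF.differentiable one_ne_zero (f x)) (hx (uIoc_subset_uIcc hxab))).symm

end AbsolutelyContinuousOnInterval

theorem intervalIntegral.integral_mul_comp_primitive {g F F' : ℝ → ℝ} {a b : ℝ}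
    (hg : IntervalIntegrable g volume a b) (hF : ∀ y, HasDerivAt F (F' y) y)
    (hF' : Continuous F') :
    ∫ x in a..b, g x * F' (∫ t in a..x, g t) = F (∫ t in a..b, g t) - F 0 := by
  have hderiv : deriv F = F' := funext fun y ↦ (hF y).deriv
  have hC1 : ContDiff ℝ 1 F :=
    contDiff_one_iff_deriv.2 ⟨fun y ↦ (hF y).differentiableAt, hderiv ▸ hF'⟩
  have hK := hg.absolutelyContinuousOnInterval_intervalIntegral (c := a) left_mem_uIcc
  have := hK.integral_deriv_comp_mul_deriv hC1
  rw [intervalIntegral.integral_same, hderiv] at this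
  rw [← this]
  refine intervalIntegral.integral_congr_ae ?_
  filter_upwards [hg.ae_hasDerivAt_integral] with x hx hxab
  rw [(hx (uIoc_subset_uIcc hxab) a left_mem_uIcc).deriv, mul_comm]

namespace IntervalIntegrable

variable {a b t : ℝ}

theorem of_mem_Icc {E : Type*} [NormedAddCommGroup E] {g : ℝ → E}
    (hg : IntervalIntegrable g volume a b) (ht : t ∈ Icc a b) :
    IntervalIntegrable g volume a t :=
  hg.mono_set (uIcc_subset_uIcc left_mem_uIcc (Icc_subset_uIcc ht))

theorem mul_continuousOn_of_mem_Icc_s3 {R : Type*} [NormedRing R] {g f : ℝ → R}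
    (hg : IntervalIntegrable g volume a b) (hf : ContinuousOn f (Icc a b)) (ht : t ∈ Icc a b) :
    IntervalIntegrable (fun s ↦ g s * f s) volume a t :=
  (hg.of_mem_Icc ht).mul_continuousOn
    (hf.mono (by rw [uIcc_of_le ht.1]; exact Icc_subset_Icc_right ht.2))

end IntervalIntegrable

section Volterra

variable {g : ℝ → ℝ} {a b t : ℝ}

theorem integral_mul_mono_of_mem_Icc {f₁ f₂ : ℝ → ℝ} (hg : IntervalIntegrable g volume a b)
    (hg0 : ∀ s ∈ Icc a b, 0 ≤ g s) (hf₁ : ContinuousOn f₁ (Icc a b))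
    (hf₂ : ContinuousOn f₂ (Icc a b)) (ht : t ∈ Icc a b) (h : ∀ s ∈ Icc a t, f₁ s ≤ f₂ s) :
    ∫ s in a..t, g s * f₁ s ≤ ∫ s in a..t, g s * f₂ s :=
  intervalIntegral.integral_mono_on ht.1 (hg.mul_continuousOn_of_mem_Icc_s3 hf₁ ht)
    (hg.mul_continuousOn_of_mem_Icc_s3 hf₂ ht) fun s hs ↦
      mul_le_mul_of_nonneg_left (h s hs) (hg0 s ⟨hs.1, hs.2.trans ht.2⟩)

theorem continuousOn_primitive_Icc (hg : IntervalIntegrable g volume a b) :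
    ContinuousOn (fun t ↦ ∫ s in a..t, g s) (Icc a b) :=
  (intervalIntegral.continuousOn_primitive_interval' hg left_mem_uIcc).mono Icc_subset_uIcc

theorem nonpos_of_le_integral_mul {w : ℝ → ℝ} (hg : IntervalIntegrable g volume a b)
    (hg0 : ∀ s ∈ Icc a b, 0 ≤ g s) (hw : ContinuousOn w (Icc a b))
    (hle : ∀ t ∈ Icc a b, w t ≤ ∫ s in a..t, g s * w s) (ht : t ∈ Icc a b) : w t ≤ 0 := by
  obtain ⟨M, hM⟩ := isCompact_Icc.bddAbove_image hw
  have hK := continuousOn_primitive_Icc hg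
  have hiter : ∀ n : ℕ, ∀ t ∈ Icc a b, w t ≤ M * ((∫ s in a..t, g s) ^ n / n !) := by
    intro n
    induction n with
    | zero => intro t ht; simpa using hM (mem_image_of_mem w ht)
    | succ n ih =>
      intro t ht
      have hF (y : ℝ) :
          HasDerivAt (fun y ↦ M * (y ^ (n + 1) / (n + 1)!)) (M * (y ^ n / n !)) y := by
        refine (((hasDerivAt_pow (n + 1) y).div_const _).const_mul M).congr_deriv ?_
        rw [Nat.factorial_succ]
        push_cast
        field_simp
      calc w t ≤ ∫ s in a..t, g s * w s := hle t ht
        _ ≤ ∫ s in a..t, g s * (M * ((∫ x in a..s, g x) ^ n / n !)) :=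
          integral_mul_mono_of_mem_Icc hg hg0 hw
            (continuousOn_const.mul ((hK.pow n).div_const _)) ht
            fun s hs ↦ ih s ⟨hs.1, hs.2.trans ht.2⟩
        _ = M * ((∫ s in a..t, g s) ^ (n + 1) / (n + 1)!) := by
          rw [intervalIntegral.integral_mul_comp_primitive (hg.of_mem_Icc ht) hF (by fun_prop)]
          simp
  have hlim : Tendsto (fun n : ℕ ↦ M * ((∫ s in a..t, g s) ^ n / n !)) atTop (nhds 0) := by
    simpa using (FloorSemiring.tendsto_pow_div_factorial_atTop (∫ s in a..t, g s)).const_mul M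
  exact ge_of_tendsto' hlim fun n ↦ hiter n t ht

theorem integral_mul_sub_of_mem_Icc {f₁ f₂ : ℝ → ℝ} (hg : IntervalIntegrable g volume a b)
    (hf₁ : ContinuousOn f₁ (Icc a b)) (hf₂ : ContinuousOn f₂ (Icc a b)) (ht : t ∈ Icc a b) :
    ∫ s in a..t, g s * (f₁ s - f₂ s) = (∫ s in a..t, g s * f₁ s) - ∫ s in a..t, g s * f₂ s := by
  simp_rw [mul_sub]
  exact intervalIntegral.integral_sub (hg.mul_continuousOn_of_mem_Icc_s3 hf₁ ht)
    (hg.mul_continuousOn_of_mem_Icc_s3 hf₂ ht)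

theorem integral_mul_sinh_primitive (hg : IntervalIntegrable g volume a b) :
    ∫ s in a..b, g s * Real.sinh (∫ x in a..s, g x) = Real.cosh (∫ s in a..b, g s) - 1 := by
  simpa using intervalIntegral.integral_mul_comp_primitive hg
    Real.hasDerivAt_cosh Real.continuous_sinh

theorem integral_mul_cosh_primitive (hg : IntervalIntegrable g volume a b) :
    ∫ s in a..b, g s * Real.cosh (∫ x in a..s, g x) = Real.sinh (∫ s in a..b, g s) := by
  simpa using intervalIntegral.integral_mul_comp_primitive hg
    Real.hasDerivAt_sinh Real.continuous_cosh

/-- `cosh K` and `sinh K`, for `K` the primitive of `g`, solve the system with equality, so the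
excess of `(u, v)` over them satisfies a homogeneous Volterra inequality. -/
theorem le_sinh_of_le_one_add_integral {u v : ℝ → ℝ} (hg : IntervalIntegrable g volume a b)
    (hg0 : ∀ s ∈ Icc a b, 0 ≤ g s) (hu : ContinuousOn u (Icc a b)) (hv : ContinuousOn v (Icc a b))
    (hu_le : ∀ t ∈ Icc a b, u t ≤ 1 + ∫ s in a..t, g s * v s)
    (hv_le : ∀ t ∈ Icc a b, v t ≤ ∫ s in a..t, g s * u s) (ht : t ∈ Icc a b) :
    v t ≤ Real.sinh (∫ s in a..t, g s) := by
  have hK := continuousOn_primitive_Icc hg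
  have hcosh : ContinuousOn (fun t ↦ Real.cosh (∫ s in a..t, g s)) (Icc a b) :=
    Real.continuous_cosh.comp_continuousOn hK
  have hsinh : ContinuousOn (fun t ↦ Real.sinh (∫ s in a..t, g s)) (Icc a b) :=
    Real.continuous_sinh.comp_continuousOn hK
  set w : ℝ → ℝ := fun t ↦
    max (u t - Real.cosh (∫ s in a..t, g s)) (v t - Real.sinh (∫ s in a..t, g s))
  have hu' : ContinuousOn (fun t ↦ u t - Real.cosh (∫ s in a..t, g s)) (Icc a b) :=
    hu.sub hcosh
  have hv' : ContinuousOn (fun t ↦ v t - Real.sinh (∫ s in a..t, g s)) (Icc a b) :=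
    hv.sub hsinh
  have hw : ContinuousOn w (Icc a b) := hu'.sup hv'
  refine sub_nonpos.1 ((le_max_right _ _).trans
    (nonpos_of_le_integral_mul (w := w) hg hg0 hw ?_ ht))
  intro t ht
  have hv_w := integral_mul_mono_of_mem_Icc hg hg0 hv' hw ht fun s _ ↦ le_max_right _ _
  have hu_w := integral_mul_mono_of_mem_Icc hg hg0 hu' hw ht fun s _ ↦ le_max_left _ _
  rw [integral_mul_sub_of_mem_Icc hg hv hsinh ht,
    integral_mul_sinh_primitive (hg.of_mem_Icc ht)] at hv_w
  rw [integral_mul_sub_of_mem_Icc hg hu hcosh ht,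
    integral_mul_cosh_primitive (hg.of_mem_Icc ht)] at hu_w
  exact max_le (by linarith [hu_le t ht]) (by linarith [hv_le t ht])

theorem integral_mul_le_cosh_sub_one {u v : ℝ → ℝ} (hab : a ≤ b)
    (hg : IntervalIntegrable g volume a b) (hg0 : ∀ s ∈ Icc a b, 0 ≤ g s)
    (hu : ContinuousOn u (Icc a b)) (hv : ContinuousOn v (Icc a b))
    (hu_le : ∀ t ∈ Icc a b, u t ≤ 1 + ∫ s in a..t, g s * v s)
    (hv_le : ∀ t ∈ Icc a b, v t ≤ ∫ s in a..t, g s * u s) :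
    ∫ s in a..b, g s * v s ≤ Real.cosh (∫ s in a..b, g s) - 1 := by
  rw [← integral_mul_sinh_primitive hg]
  exact integral_mul_mono_of_mem_Icc hg hg0 hv
    (Real.continuous_sinh.comp_continuousOn (continuousOn_primitive_Icc hg)) (right_mem_Icc.2 hab)
    fun s hs ↦ le_sinh_of_le_one_add_integral hg hg0 hu hv hu_le hv_le hs

theorem mul_le_add_integral_mul_of_antitoneOn {f h ω : ℝ → ℝ} {c c' : ℝ}
    (hg : IntervalIntegrable g volume a b) (hg0 : ∀ s ∈ Icc a b, 0 ≤ g s)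
    (hh : ContinuousOn h (Icc a b)) (hω : ContinuousOn ω (Icc a b))
    (hh0 : ∀ s ∈ Icc a b, 0 ≤ h s) (hω_anti : AntitoneOn ω (Icc a b)) (ht : t ∈ Icc a b)
    (hω0 : 0 ≤ ω t) (hf : f t ≤ c + ∫ s in a..t, g s * h s) (hc : c * ω t ≤ c') :
    f t * ω t ≤ c' + ∫ s in a..t, g s * (h s * ω s) :=
  calc f t * ω t ≤ (c + ∫ s in a..t, g s * h s) * ω t := mul_le_mul_of_nonneg_right hf hω0
    _ = c * ω t + ∫ s in a..t, g s * (h s * ω t) := by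
      rw [add_mul, ← intervalIntegral.integral_mul_const]
      simp only [mul_assoc]
    _ ≤ c' + ∫ s in a..t, g s * (h s * ω s) := by
      refine add_le_add hc (integral_mul_mono_of_mem_Icc hg hg0 (hh.mul continuousOn_const)
        (hh.mul hω) ht fun s hs ↦ ?_)
      have hs' : s ∈ Icc a b := ⟨hs.1, hs.2.trans ht.2⟩
      exact mul_le_mul_of_nonneg_left (hω_anti hs' ht hs.2) (hh0 s hs')

theorem integral_mul_exp_le_cosh_sub_one {x y : ℝ → ℝ} {η μ : ℝ} (hab : a ≤ b)
    (hg : IntervalIntegrable g volume a b) (hg0 : ∀ s ∈ Icc a b, 0 ≤ g s)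
    (hx : ContinuousOn x (Icc a b)) (hy : ContinuousOn y (Icc a b))
    (hx0 : ∀ s ∈ Icc a b, 0 ≤ x s) (hy0 : ∀ s ∈ Icc a b, 0 ≤ y s) (hμ0 : μ ≤ 0) (hμη : μ ≤ η)
    (hx_le : ∀ t ∈ Icc a b, x t ≤ 1 + ∫ s in a..t, g s * (y s * Real.exp (-(2 * η * s))))
    (hy_le : ∀ t ∈ Icc a b, y t ≤ ∫ s in a..t, g s * (x s * Real.exp (2 * η * s))) :
    ∫ s in a..b, g s * (y s * Real.exp (-(2 * η * s)))
      ≤ (Real.cosh (∫ s in a..b, g s) - 1) * Real.exp (-(2 * μ * (b - a))) := by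
  -- Both `ρ` and `ψ` are antitone, so `(x ρ, y ψ)` satisfies the unweighted system;
  -- removing the weight at the end costs the factor `ρ b⁻¹`.
  set ρ : ℝ → ℝ := fun s ↦ Real.exp (2 * μ * (s - a))
  set ψ : ℝ → ℝ := fun s ↦ Real.exp (-(2 * η * s)) * ρ s
  have hρ_anti : AntitoneOn ρ (Icc a b) := fun s _ t _ hst ↦ Real.exp_le_exp.2 (by nlinarith)
  have hψ_anti : AntitoneOn ψ (Icc a b) := fun s _ t _ hst ↦ by
    simp only [ψ, ρ, ← Real.exp_add]
    exact Real.exp_le_exp.2 (by nlinarith)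
  have hu : ContinuousOn (fun s ↦ x s * ρ s) (Icc a b) := hx.mul (by fun_prop)
  have hv : ContinuousOn (fun s ↦ y s * Real.exp (-(2 * η * s)) * ρ s) (Icc a b) :=
    (hy.mul (by fun_prop)).mul (by fun_prop)
  have hu_le (t : ℝ) (ht : t ∈ Icc a b) :
      x t * ρ t ≤ 1 + ∫ s in a..t, g s * (y s * Real.exp (-(2 * η * s)) * ρ s) :=
    mul_le_add_integral_mul_of_antitoneOn hg hg0 (hy.mul (by fun_prop)) (by fun_prop)
      (fun s hs ↦ mul_nonneg (hy0 s hs) (Real.exp_nonneg _)) hρ_anti ht (Real.exp_nonneg _)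
      (hx_le t ht) (by simpa [ρ] using hρ_anti ⟨le_rfl, hab⟩ ht ht.1)
  have hv_le (t : ℝ) (ht : t ∈ Icc a b) :
      y t * Real.exp (-(2 * η * t)) * ρ t ≤ ∫ s in a..t, g s * (x s * ρ s) := by
    have hcancel (s : ℝ) : x s * Real.exp (2 * η * s) * ψ s = x s * ρ s := by
      simp only [ψ, mul_assoc, ← mul_assoc (Real.exp _), ← Real.exp_add, add_neg_cancel,
        Real.exp_zero, one_mul]
    have h := mul_le_add_integral_mul_of_antitoneOn (f := y) (c := 0) (c' := 0)
      (h := fun s ↦ x s * Real.exp (2 * η * s)) hg hg0 (hx.mul (by fun_prop)) (by fun_prop)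
      (fun s hs ↦ mul_nonneg (hx0 s hs) (Real.exp_nonneg _)) hψ_anti ht (by positivity)
      (by simpa using hy_le t ht) (zero_mul _).le
    simp only [hcancel, zero_add] at h
    exact (mul_assoc _ _ _).trans_le h
  have hρ_inv (s : ℝ) (hs : s ∈ Icc a b) : 1 ≤ ρ s * Real.exp (-(2 * μ * (b - a))) := by
    rw [← Real.exp_add]
    exact Real.one_le_exp (by nlinarith [hs.2])
  calc ∫ s in a..b, g s * (y s * Real.exp (-(2 * η * s)))
      ≤ ∫ s in a..b, g s *
          (y s * Real.exp (-(2 * η * s)) * ρ s * Real.exp (-(2 * μ * (b - a)))) := by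
        refine integral_mul_mono_of_mem_Icc hg hg0 (by fun_prop) (by fun_prop)
          (right_mem_Icc.2 hab) fun s hs ↦ ?_
        rw [mul_assoc _ (ρ s)]
        exact le_mul_of_one_le_right (mul_nonneg (hy0 s hs) (Real.exp_nonneg _)) (hρ_inv s hs)
    _ = (∫ s in a..b, g s * (y s * Real.exp (-(2 * η * s)) * ρ s))
          * Real.exp (-(2 * μ * (b - a))) := by
        rw [← intervalIntegral.integral_mul_const]
        simp only [mul_assoc]
    _ ≤ (Real.cosh (∫ s in a..b, g s) - 1) * Real.exp (-(2 * μ * (b - a))) := by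
        gcongr
        exact integral_mul_le_cosh_sub_one hab hg hg0 hu hv hu_le hv_le

end Volterra

theorem norm_sub_le_integral_norm_of_hasDerivAt {E : Type*} [NormedAddCommGroup E]
    [NormedSpace ℝ E] [CompleteSpace E] {f f' : ℝ → E} {a b : ℝ} (hab : a ≤ b)
    (hf : ∀ x ∈ Icc a b, HasDerivAt f (f' x) x) (hf' : IntervalIntegrable f' volume a b) :
    ‖f b - f a‖ ≤ ∫ x in a..b, ‖f' x‖ := by
  rw [← intervalIntegral.integral_eq_sub_of_hasDerivAt (by rwa [uIcc_of_le hab]) hf']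
  exact intervalIntegral.norm_integral_le_integral_norm hab

theorem norm_sub_one_le_of_zakharovShabat {q r A B : ℝ → ℂ} {ζ : ℂ} {a b μ : ℝ} (hab : a ≤ b)
    (hq : IntervalIntegrable q volume a b) (hr : IntervalIntegrable r volume a b)
    (hqr : ∀ t, ‖r t‖ = ‖q t‖)
    (hA : ∀ t ∈ Icc a b, HasDerivAt A (q t * B t * Complex.exp (2 * Complex.I * ζ * t)) t)
    (hB : ∀ t ∈ Icc a b, HasDerivAt B (r t * A t * Complex.exp (-(2 * Complex.I * ζ * t))) t)
    (hA0 : A a = 1) (hB0 : B a = 0) (hμ0 : μ ≤ 0) (hμζ : μ ≤ ζ.im) :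
    ‖A b - 1‖ ≤ (Real.cosh (∫ t in a..b, ‖q t‖) - 1) * Real.exp (-(2 * μ * (b - a))) := by
  have hAc : ContinuousOn A (Icc a b) := fun t ht ↦ (hA t ht).continuousAt.continuousWithinAt
  have hBc : ContinuousOn B (Icc a b) := fun t ht ↦ (hB t ht).continuousAt.continuousWithinAt
  have hE (s : ℝ) : ‖Complex.exp (2 * Complex.I * ζ * s)‖ = Real.exp (-(2 * ζ.im * s)) := by
    simp [Complex.norm_exp]
  have hE' (s : ℝ) : ‖Complex.exp (-(2 * Complex.I * ζ * s))‖ = Real.exp (2 * ζ.im * s) := by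
    simp [Complex.norm_exp]
  have hEc : Continuous fun s : ℝ ↦ Complex.exp (2 * Complex.I * ζ * s) := by fun_prop
  have hEc' : Continuous fun s : ℝ ↦ Complex.exp (-(2 * Complex.I * ζ * s)) := by fun_prop
  have hA_sub : ∀ t ∈ Icc a b,
      ‖A t - 1‖ ≤ ∫ s in a..t, ‖q s‖ * (‖B s‖ * Real.exp (-(2 * ζ.im * s))) := by
    intro t ht
    have hint := hq.mul_continuousOn_of_mem_Icc_s3 (hBc.mul hEc.continuousOn) ht
    have h := norm_sub_le_integral_norm_of_hasDerivAt ht.1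
      (fun s hs ↦ hA s ⟨hs.1, hs.2.trans ht.2⟩) (by simpa only [Pi.mul_apply, mul_assoc] using hint)
    simp only [norm_mul, hE, hA0] at h
    simpa only [mul_assoc] using h
  have hB_le : ∀ t ∈ Icc a b,
      ‖B t‖ ≤ ∫ s in a..t, ‖q s‖ * (‖A s‖ * Real.exp (2 * ζ.im * s)) := by
    intro t ht
    have hint := hr.mul_continuousOn_of_mem_Icc_s3 (hAc.mul hEc'.continuousOn) ht
    have h := norm_sub_le_integral_norm_of_hasDerivAt ht.1
      (fun s hs ↦ hB s ⟨hs.1, hs.2.trans ht.2⟩) (by simpa only [Pi.mul_apply, mul_assoc] using hint)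
    simp only [norm_mul, hE', hqr, hB0, sub_zero] at h
    simpa only [mul_assoc] using h
  refine (hA_sub b (right_mem_Icc.2 hab)).trans (integral_mul_exp_le_cosh_sub_one hab hq.norm
    (fun _ _ ↦ norm_nonneg _) hAc.norm hBc.norm (fun _ _ ↦ norm_nonneg _)
    (fun _ _ ↦ norm_nonneg _) hμ0 hμζ (fun t ht ↦ ?_) hB_le)
  linarith [hA_sub t ht, norm_le_norm_add_norm_sub' (A t) 1, norm_one (α := ℂ)]

theorem a_coefficient_exponential_bound_general
    (Tm Tp : ℝ) (hTm : 0 ≤ Tm) (hTp : 0 ≤ Tp)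
    (q : ℝ → ℂ) (hq : Integrable q)
    (r : ℝ → ℂ) (hr : ∀ t, r t = -(starRingEnd ℂ) (q t))
    (ζ : ℂ)
    (A B : ℝ → ℂ)
    (hA : ∀ t, HasDerivAt A (q t * B t * Complex.exp (2 * Complex.I * ζ * t)) t)
    (hB : ∀ t, HasDerivAt B (r t * A t * Complex.exp (-(2 * Complex.I * ζ * t))) t)
    (hA0 : A (-Tm) = 1) (hB0 : B (-Tm) = 0)
    (a atilde : ℂ) (ha : a = A Tp)
    (hatilde : atilde = (a - 1) * Complex.exp (-(2 * Complex.I * ζ * Tp)))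
    (κ : ℝ) (hκ : κ = ∫ t in Icc (-Tm) Tp, ‖q t‖) :
    (0 ≤ ζ.im → ‖atilde‖ ≤ (Real.cosh κ - 1) * Real.exp (2 * Tp * ζ.im))
    ∧ (ζ.im < 0 → ‖atilde‖ ≤ (Real.cosh κ - 1) * Real.exp (-(2 * Tm * ζ.im))) := by
  have hab : -Tm ≤ Tp := by linarith
  obtain rfl : r = fun t ↦ -(starRingEnd ℂ) (q t) := funext hr
  have hr_int : Integrable fun t ↦ -(starRingEnd ℂ) (q t) :=
    (Complex.conjCLE.toContinuousLinearMap.integrable_comp hq).neg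
  have hκ' : κ = ∫ t in -Tm..Tp, ‖q t‖ := by
    rw [hκ, intervalIntegral.integral_of_le hab, integral_Icc_eq_integral_Ioc]
  have hbound (μ : ℝ) (hμ0 : μ ≤ 0) (hμζ : μ ≤ ζ.im) :
      ‖a - 1‖ ≤ (Real.cosh κ - 1) * Real.exp (-(2 * μ * (Tp - -Tm))) := by
    rw [ha, hκ']
    exact norm_sub_one_le_of_zakharovShabat hab hq.intervalIntegrable hr_int.intervalIntegrable
      (by simp) (fun t _ ↦ hA t) (fun t _ ↦ hB t) hA0 hB0 hμ0 hμζ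
  have hnorm : ‖atilde‖ = ‖a - 1‖ * Real.exp (2 * Tp * ζ.im) := by
    rw [hatilde, norm_mul, Complex.norm_exp]
    congr 2
    simp
    ring
  refine ⟨fun hζ ↦ ?_, fun hζ ↦ ?_⟩
  · rw [hnorm]
    gcongr
    simpa using hbound 0 le_rfl hζ
  · rw [hnorm, show -(2 * Tm * ζ.im) = -(2 * ζ.im * (Tp - -Tm)) + 2 * Tp * ζ.im by ring,
      Real.exp_add, ← mul_assoc]
    gcongr
    exact hbound ζ.im hζ.le le_rfl

/-- For `q ∈ L¹` supported in `Ω = [-T₋,T₊]`, the Zakharov–Shabat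
coefficient `a(ζ)` (from the Jost solution `φ = (A e^{-iζt}, B e^{iζt})` with
`A(-T₋)=1`, `B(-T₋)=0`, `a(ζ) = A(T₊)`) is such that
`atilde(ζ) = [a(ζ)-1] e^{-2iζT₊}` satisfies `|atilde(ζ)| ≤ [cosh(κ)-1] e^{2T₊ Im ζ}` for
`Im ζ ≥ 0` and `|atilde(ζ)| ≤ [cosh(κ)-1] e^{-2T₋ Im ζ}` for `Im ζ < 0`,
where `κ = ‖q‖_{L¹(Ω)}`. -/
theorem a_coefficient_exponential_bound
    (Tm Tp : ℝ) (hTm : 0 ≤ Tm) (hTp : 0 ≤ Tp)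
    (q : ℝ → ℂ) (hq : Integrable q)
    (hsupp : Function.support q ⊆ Icc (-Tm) Tp)
    (r : ℝ → ℂ) (hr : ∀ t, r t = -(starRingEnd ℂ) (q t))
    (ζ : ℂ)
    (A B : ℝ → ℂ)
    (hA : ∀ t, HasDerivAt A (q t * B t * Complex.exp (2 * Complex.I * ζ * t)) t)
    (hB : ∀ t, HasDerivAt B (r t * A t * Complex.exp (-(2 * Complex.I * ζ * t))) t)
    (hA0 : A (-Tm) = 1) (hB0 : B (-Tm) = 0)
    (a atilde : ℂ) (ha : a = A Tp)
    (hatilde : atilde = (a - 1) * Complex.exp (-(2 * Complex.I * ζ * Tp)))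
    (κ : ℝ) (hκ : κ = ∫ t in Icc (-Tm) Tp, ‖q t‖) :
    (0 ≤ ζ.im → ‖atilde‖ ≤ (Real.cosh κ - 1) * Real.exp (2 * Tp * ζ.im))
    ∧ (ζ.im < 0 → ‖atilde‖ ≤ (Real.cosh κ - 1) * Real.exp (-(2 * Tm * ζ.im))) :=
  a_coefficient_exponential_bound_general Tm Tp hTm hTp q hq r hr ζ A B hA hB hA0 hB0 a atilde ha
    hatilde κ hκ
end

section
/- Let q : R → C be integrable, of bounded variation, supported in Ω = [-T_-,T_+], and vanishing at the endpoints of Ω. Set D = ½‖q‖_∞ + ‖q‖_1 + ½‖∂_t q‖_1. Then for every ζ in the closed upper half-plane, |∫_{-T_-}^{t} q*(y) e^{2iζ(t-y)} dy| ≤ D/(1+|ζ|) for all t ∈ Ω. -/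
/-!
Put `c = 2iζ`; since `Re c ≤ 0`, `|e^{c(t-y)}| ≤ 1` for `y ≤ t`, which bounds the integral by
`‖q‖₁`. For decay in `ζ`, write `q*(y) = ∫_{-T₋}^y q'*` and exchange the order of integration over
the triangle `s ≤ y ≤ t`; since `∫_s^t e^{c(t-y)} dy = (e^{c(t-s)} - 1)/c`, this integration by parts
gives `c ∫_{-T₋}^t q*(y) e^{c(t-y)} dy = ∫_{-T₋}^t q'*(s) e^{c(t-s)} ds - q*(t)`, of modulus at most
`‖q'‖₁ + ‖q‖_∞`. Dividing by `|c| = 2|ζ|` and adding the first bound gives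
`(1 + |ζ|) |∫ …| ≤ D`.
-/

open MeasureTheory Complex Set
open scoped ComplexConjugate

theorem Continuous.norm_le_lpNorm_top {X E : Type*} [TopologicalSpace X] [MeasurableSpace X]
    [NormedAddCommGroup E] {μ : Measure X} [μ.IsOpenPosMeasure] {f : X → E}
    (hf : Continuous f) (hf_top : MemLp f ⊤ μ) (x : X) : ‖f x‖ ≤ lpNorm f ⊤ μ := by
  have h := (Measure.dense_of_ae (ae_le_lpNorm_exponent_top hf_top)).closure_eq
  rw [(isClosed_le hf.norm continuous_const).closure_eq, eq_univ_iff_forall] at h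
  exact h x

theorem intervalIntegral_primitive_mul {𝕜 : Type*} [RCLike 𝕜] {f g : ℝ → 𝕜} {a b : ℝ}
    (hab : a ≤ b) (hf : IntegrableOn f (Ioc a b)) (hg : Continuous g) :
    ∫ y in a..b, (∫ s in a..y, f s) * g y = ∫ s in a..b, f s * ∫ y in s..b, g y := by
  obtain ⟨C, hC⟩ := isCompact_Icc.exists_bound_of_continuousOn (hg.continuousOn (s := Icc a b))
  set μ := volume.restrict (Ioc a b)
  set F : ℝ × ℝ → 𝕜 := {p | p.2 ≤ p.1}.indicator fun p => f p.2 * g p.1 with hF_def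
  have hF : Integrable F (μ.prod μ) := by
    refine ((integrable_const C).mul_prod hf.norm).mono' ?_ ?_
    · exact (hf.aestronglyMeasurable.comp_snd.mul
        (hg.comp continuous_fst).aestronglyMeasurable).indicator
        (measurableSet_le measurable_snd measurable_fst)
    · rw [Measure.prod_restrict]
      filter_upwards [ae_restrict_mem (measurableSet_Ioc.prod measurableSet_Ioc)] with p hp
      rw [hF_def, norm_indicator_eq_indicator_norm]
      refine (indicator_le_self' (fun _ _ => norm_nonneg _) p : _ ≤ ‖f p.2 * g p.1‖) |>.trans ?_
      rw [norm_mul, mul_comm]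
      exact mul_le_mul_of_nonneg_right (hC _ (Ioc_subset_Icc_self hp.1)) (norm_nonneg _)
  have hswap := integral_integral_swap (f := fun y s => F (y, s)) hF
  rw [intervalIntegral.integral_of_le hab, intervalIntegral.integral_of_le hab]
  convert hswap using 1
  · refine setIntegral_congr_fun measurableSet_Ioc fun y hy => ?_
    have hFy : (fun s => F (y, s)) = fun s => (Iic y).indicator f s * g y := by
      ext s; by_cases h : s ≤ y <;> simp [hF_def, h]
    have hset : Iic y ∩ Ioc a b = Ioc a y := by
      ext; simp only [mem_inter_iff, mem_Iic, mem_Ioc]; grind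
    rw [hFy, integral_mul_const, integral_indicator measurableSet_Iic,
      Measure.restrict_restrict measurableSet_Iic, hset, intervalIntegral.integral_of_le hy.1.le]
  · refine setIntegral_congr_fun measurableSet_Ioc fun s hs => ?_
    have hFs : (fun y => F (y, s)) = fun y => f s * (Ici s).indicator g y := by
      ext y; by_cases h : s ≤ y <;> simp [hF_def, h]
    have hset : Ici s ∩ Ioc a b = Icc s b := by
      ext; simp only [mem_inter_iff, mem_Ici, mem_Ioc, mem_Icc]; grind
    rw [hFs, integral_const_mul, integral_indicator measurableSet_Ici,
      Measure.restrict_restrict measurableSet_Ici, hset, integral_Icc_eq_integral_Ioc,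
      intervalIntegral.integral_of_le hs.2]

theorem norm_intervalIntegral_mul_le_integral_norm {𝕜 : Type*} [RCLike 𝕜] {f g : ℝ → 𝕜}
    {a b : ℝ} (hab : a ≤ b) (hf : Integrable f) (hg : ∀ y ∈ Ioc a b, ‖g y‖ ≤ 1) :
    ‖∫ y in a..b, f y * g y‖ ≤ ∫ y, ‖f y‖ :=
  calc ‖∫ y in a..b, f y * g y‖ ≤ ∫ y in a..b, ‖f y‖ :=
        intervalIntegral.norm_integral_le_of_norm_le hab
          (ae_of_all _ fun y hy => (norm_mul_le _ _).trans
            (mul_le_of_le_one_right (norm_nonneg _) (hg y hy)))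
          hf.norm.intervalIntegrable
    _ = ∫ y in Ioc a b, ‖f y‖ := intervalIntegral.integral_of_le hab
    _ ≤ ∫ y, ‖f y‖ := setIntegral_le_integral hf.norm (ae_of_all _ fun _ => norm_nonneg _)

theorem norm_exp_mul_sub_le_one {c : ℂ} (hc : c.re ≤ 0) {y t : ℝ} (hyt : y ≤ t) :
    ‖exp (c * (t - y))‖ ≤ 1 := by
  rw [norm_exp, Real.exp_le_one_iff]
  simpa using mul_nonpos_of_nonpos_of_nonneg hc (sub_nonneg.mpr hyt)

theorem integral_exp_mul_sub {c : ℂ} (hc : c ≠ 0) (s t : ℝ) :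
    ∫ y in s..t, exp (c * (t - y)) = (exp (c * (t - s)) - 1) / c := by
  have := intervalIntegral.integral_comp_sub_left (fun x : ℝ => exp (c * x)) (a := s) (b := t) t
  push_cast at this
  rw [this, integral_exp_mul_complex hc]
  simp

theorem mul_integral_primitive_mul_exp {f : ℝ → ℂ} {a t : ℝ} (hat : a ≤ t)
    (hf : IntegrableOn f (Ioc a t)) (c : ℂ) :
    c * ∫ y in a..t, (∫ s in a..y, f s) * exp (c * (t - y))
      = (∫ s in a..t, f s * exp (c * (t - s))) - ∫ s in a..t, f s := by
  rcases eq_or_ne c 0 with rfl | hc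
  · simp
  have hfi : IntervalIntegrable f volume a t :=
    (intervalIntegrable_iff_integrableOn_Ioc_of_le hat).2 hf
  rw [intervalIntegral_primitive_mul hat hf (by fun_prop), ← intervalIntegral.integral_const_mul,
    ← intervalIntegral.integral_sub (hfi.mul_continuousOn (by fun_prop)) hfi]
  refine intervalIntegral.integral_congr fun s _ => ?_
  rw [integral_exp_mul_sub hc]
  field_simp

theorem norm_mul_integral_primitive_mul_exp_le {f : ℝ → ℂ} {a t : ℝ} (hat : a ≤ t)
    (hf : Integrable f) {c : ℂ} (hc : c.re ≤ 0) :
    ‖c‖ * ‖∫ y in a..t, (∫ s in a..y, f s) * exp (c * (t - y))‖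
      ≤ (∫ s, ‖f s‖) + ‖∫ s in a..t, f s‖ := by
  rw [← norm_mul, mul_integral_primitive_mul_exp hat hf.integrableOn c]
  exact (norm_sub_le _ _).trans (add_le_add
    (norm_intervalIntegral_mul_le_integral_norm hat hf fun y hy => norm_exp_mul_sub_le_one hc hy.2)
    le_rfl)

theorem Phi2_decay_bound_BV_general
    (Tm Tp : ℝ)
    (q q' : ℝ → ℂ) (hq : Integrable q) (hq' : Integrable q')
    (hrep : ∀ t : ℝ, q t = ∫ s in (-Tm)..t, q' s)
    (D : ℝ)
    (hD : D = (1 / 2) * (eLpNorm q ⊤ volume).toReal + (∫ t, ‖q t‖)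
            + (1 / 2) * ∫ t, ‖q' t‖) :
    ∀ ζ : ℂ, 0 ≤ ζ.im → ∀ t ∈ Icc (-Tm) Tp,
      ‖∫ y in (-Tm)..t, (starRingEnd ℂ) (q y) * Complex.exp (2 * Complex.I * ζ * (t - y))‖
        ≤ D / (1 + ‖ζ‖) := by
  have hq_le : ∀ u, ‖q u‖ ≤ ∫ s, ‖q' s‖ := fun u => hrep u ▸
    intervalIntegral.norm_integral_le_integral_norm_uIoc.trans
      (setIntegral_le_integral hq'.norm (ae_of_all _ fun _ => norm_nonneg _))
  have hq_cont : Continuous q := (funext hrep : q = _) ▸ hq'.continuous_primitive (-Tm)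
  have hq_le_sup : ∀ u, ‖q u‖ ≤ (eLpNorm q ⊤ volume).toReal := by
    rw [toReal_eLpNorm hq.aestronglyMeasurable]
    exact hq_cont.norm_le_lpNorm_top
      (memLp_top_of_bound hq.aestronglyMeasurable _ (ae_of_all _ hq_le))
  have hconj : ∀ y, conj (q y) = ∫ s in (-Tm)..y, conj (q' s) := fun y => by
    simp [hrep y, intervalIntegral, integral_conj]
  have hq_conj : Integrable (fun y => conj (q y)) :=
    conjCLE.toContinuousLinearMap.integrable_comp hq
  have hq'_conj : Integrable (fun y => conj (q' y)) :=
    conjCLE.toContinuousLinearMap.integrable_comp hq'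
  intro ζ hζ t ht
  have hre : (2 * I * ζ).re ≤ 0 := by simpa using hζ
  have h₀ := norm_intervalIntegral_mul_le_integral_norm ht.1 hq_conj
    fun y hy => norm_exp_mul_sub_le_one hre hy.2
  have h₁ := norm_mul_integral_primitive_mul_exp_le ht.1 hq'_conj hre
  simp only [← hconj, norm_conj] at h₀ h₁
  rw [show ‖2 * I * ζ‖ = 2 * ‖ζ‖ by simp] at h₁
  rw [le_div_iff₀ (by positivity), hD]
  linarith [hq_le_sup t]

/-- Let `q : ℝ → ℂ` be integrable, of bounded variation (absolutely continuous
with derivative `q' ∈ L¹`), supported in `Ω = [-T₋,T₊]` and vanishing at the endpoints.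
With `D = ½‖q‖_∞ + ‖q‖₁ + ½‖q'‖₁`, for every `ζ` with `Im ζ ≥ 0` and every `t ∈ Ω`,
`|∫_{-T₋}^t q*(y) e^{2iζ(t-y)} dy| ≤ D/(1+|ζ|)`. -/
theorem Phi2_decay_bound_BV
    (Tm Tp : ℝ) (hTm : 0 ≤ Tm) (hTp : 0 ≤ Tp)
    (q q' : ℝ → ℂ) (hq : Integrable q) (hq' : Integrable q')
    (hsupp : Function.support q ⊆ Icc (-Tm) Tp)
    (hrep : ∀ t : ℝ, q t = ∫ s in (-Tm)..t, q' s)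
    (hend : q (-Tm) = 0 ∧ q Tp = 0)
    (D : ℝ)
    (hD : D = (1 / 2) * (eLpNorm q ⊤ volume).toReal + (∫ t, ‖q t‖)
            + (1 / 2) * ∫ t, ‖q' t‖) :
    ∀ ζ : ℂ, 0 ≤ ζ.im → ∀ t ∈ Icc (-Tm) Tp,
      ‖∫ y in (-Tm)..t, (starRingEnd ℂ) (q y) * Complex.exp (2 * Complex.I * ζ * (t - y))‖
        ≤ D / (1 + ‖ζ‖) :=
  Phi2_decay_bound_BV_general Tm Tp q q' hq hq' hrep D hD
end

section
/- Let p ∈ L^1 ∩ L^2 and suppose there is a time T with I₁(T) = ∫_{2T}^∞ |p(-τ)|dτ < 1, and that p is continuous on (-∞,-2T). Then, with E₊(T) = ∫_T^∞ |q(t)|²dt the tail energy of the potential recovered via the Gelfand–Levitan–Marchenko equations with input f(τ) = p(-τ), one has E₊(T) ≤ 2 I₂²(T)/(1 - I₁²(T)), where I₂(T) = (∫_{2T}^∞ |p(-τ)|²dτ)^{1/2}. -/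
open MeasureTheory Complex Set Filter

/-- Epstein: Let `p ∈ L¹ ∩ L²` with `I₁(T) = ∫_{2T}^∞ |p(-τ)|dτ < 1` and
`p` continuous on `(-∞,-2T)`. If `A₁, A₂` is a (bounded, measurable) solution of the
Gelfand–Levitan–Marchenko equations at `t = T` with input `f(τ) = p(-τ)`, and the
recovered potential satisfies the tail-energy identity `∫_T^∞ |q|² = -2A₂(T,T)`, then
`E₊(T) = ∫_T^∞ |q(t)|²dt ≤ 2 I₂²(T)/(1 - I₁²(T))` with
`I₂(T) = (∫_{2T}^∞ |p(-τ)|²dτ)^{1/2}`. -/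
theorem epstein_tail_energy_estimate
    (p : ℝ → ℂ) (hp1 : Integrable p) (hp2 : MemLp p 2 volume)
    (T : ℝ)
    (f : ℝ → ℂ) (hf : ∀ τ, f τ = p (-τ))
    (hcont : ContinuousOn p (Iio (-(2 * T))))
    (I₁ I₂ : ℝ)
    (hI₁ : I₁ = ∫ τ in Ioi (2 * T), ‖p (-τ)‖)
    (hI₂ : I₂ = Real.sqrt (∫ τ in Ioi (2 * T), ‖p (-τ)‖ ^ 2))
    (hI₁lt : I₁ < 1)
    (A₁ A₂ : ℝ → ℂ)
    (hmeas₁ : Measurable A₁) (hmeas₂ : Measurable A₂)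
    (hbdd : ∃ Cb : ℝ, ∀ y, ‖A₁ y‖ ≤ Cb ∧ ‖A₂ y‖ ≤ Cb)
    (hGLM1 : ∀ y, T ≤ y →
      (starRingEnd ℂ) (A₂ y) = -∫ s in Ioi T, A₁ s * f (s + y))
    (hGLM2 : ∀ y, T ≤ y →
      (starRingEnd ℂ) (A₁ y) = f (T + y) + ∫ s in Ioi T, A₂ s * f (s + y))
    (q : ℝ → ℂ)
    (hE : (∫ t in Ioi T, ‖q t‖ ^ 2) = (-2 * A₂ T).re) :
    (∫ t in Ioi T, ‖q t‖ ^ 2) ≤ 2 * I₂ ^ 2 / (1 - I₁ ^ 2) := by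
  obtain ⟨Cb, hCb⟩ := hbdd
  have hCb0 : 0 ≤ Cb := le_trans (norm_nonneg _) (hCb 0).2
  set g : ℝ → ℝ := fun τ => ‖p (-τ)‖ with hgdef
  have hg0 : ∀ τ, 0 ≤ g τ := fun τ => norm_nonneg _
  have hfn : ∀ x, ‖f x‖ = g x := fun x => by rw [hf]
  have hP : Integrable (fun τ => p (-τ)) := hp1.comp_neg
  have hgint : Integrable g := hP.norm
  have hgsq : Integrable (fun τ => g τ ^ 2) := by
    have h1 : Integrable (fun x => ‖p x‖ ^ 2) :=
      (memLp_two_iff_integrable_sq_norm hp1.aestronglyMeasurable).mp hp2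
    exact h1.comp_neg
  -- change of variables for translates over Ioi
  have key : ∀ (h : ℝ → ℝ) (y : ℝ),
      (∫ s in Ioi T, h (s + y)) = ∫ τ in Ioi (T + y), h τ := by
    intro h y
    have := (measurePreserving_add_right volume y).setIntegral_preimage_emb
      (MeasurableEquiv.addRight y).measurableEmbedding h (Ioi (T + y))
    rw [show ((fun x => x + y) ⁻¹' Ioi (T + y)) = Ioi T by
      rw [preimage_add_const_Ioi]; ring_nf] at this
    exact this
  have tail_le : ∀ (h : ℝ → ℝ), Integrable h → (∀ τ, 0 ≤ h τ) → ∀ y, T ≤ y →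
      (∫ s in Ioi T, h (s + y)) ≤ ∫ τ in Ioi (2 * T), h τ := by
    intro h hhint hh0 y hy
    rw [key]
    exact setIntegral_mono_set hhint.integrableOn
      (Filter.Eventually.of_forall hh0)
      (HasSubset.Subset.eventuallyLE (Ioi_subset_Ioi (by linarith)))
  have mono1 : ∀ y, T ≤ y → (∫ s in Ioi T, g (s + y)) ≤ I₁ := by
    intro y hy; rw [hI₁]; exact tail_le g hgint hg0 y hy
  have hI₂sq : I₂ ^ 2 = ∫ τ in Ioi (2 * T), g τ ^ 2 := by
    rw [hI₂]; exact Real.sq_sqrt (integral_nonneg fun τ => sq_nonneg _)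
  have mono2 : ∀ y, T ≤ y → (∫ s in Ioi T, g (s + y) ^ 2) ≤ I₂ ^ 2 := by
    intro y hy; rw [hI₂sq]
    exact tail_le (fun τ => g τ ^ 2) hgsq (fun τ => sq_nonneg _) y hy
  have hI₁0 : 0 ≤ I₁ := by
    rw [hI₁]; exact integral_nonneg fun τ => norm_nonneg _
  have hI₂0 : 0 ≤ I₂ := by rw [hI₂]; exact Real.sqrt_nonneg _
  have hden : 0 < 1 - I₁ ^ 2 := by nlinarith
  set D : ℝ := I₂ ^ 2 / (1 - I₁ ^ 2) with hDdef
  have hD0 : 0 ≤ D := div_nonneg (sq_nonneg _) hden.le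
  -- translates of f and g are integrable
  have hfy : ∀ y : ℝ, Integrable (fun s => f (s + y)) := by
    intro y
    have : Integrable (fun s => p (-(s + y))) := hP.comp_add_right y
    exact this.congr (Filter.Eventually.of_forall fun s => (hf (s + y)).symm)
  have hgy : ∀ y : ℝ, Integrable (fun s => g (s + y)) := fun y => (hfy y).norm.congr
    (Filter.Eventually.of_forall fun s => hfn (s + y))
  have hgsqy : ∀ y : ℝ, Integrable (fun s => g (s + y) ^ 2) := fun y =>
    hgsq.comp_add_right y
  -- bound on A₁ in terms of a uniform bound on A₂ on [T,∞)
  have bndA1 : ∀ B : ℝ, 0 ≤ B → (∀ u, T ≤ u → ‖A₂ u‖ ≤ B) →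
      ∀ v, T ≤ v → ‖A₁ v‖ ≤ g (v + T) + B * I₁ := by
    intro B hB0 hB v hv
    have hnc : ‖A₁ v‖ = ‖(starRingEnd ℂ) (A₁ v)‖ := (RCLike.norm_conj _).symm
    rw [hnc, hGLM2 v hv]
    have hTv : g (T + v) = g (v + T) := by rw [add_comm]
    calc ‖f (T + v) + ∫ s in Ioi T, A₂ s * f (s + v)‖
        ≤ ‖f (T + v)‖ + ‖∫ s in Ioi T, A₂ s * f (s + v)‖ := norm_add_le _ _
      _ ≤ g (v + T) + B * I₁ := by
          rw [hfn, hTv]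
          gcongr
          calc ‖∫ s in Ioi T, A₂ s * f (s + v)‖
              ≤ ∫ s in Ioi T, ‖A₂ s * f (s + v)‖ := norm_integral_le_integral_norm _
            _ ≤ ∫ s in Ioi T, B * g (s + v) := by
                refine integral_mono_of_nonneg
                  (Filter.Eventually.of_forall fun s => norm_nonneg _)
                  (((hgy v).const_mul B).integrableOn)
                  (Filter.eventually_of_mem (self_mem_ae_restrict measurableSet_Ioi)
                    fun s hs => ?_)
                show ‖A₂ s * f (s + v)‖ ≤ B * g (s + v)
                rw [norm_mul, hfn]
                exact mul_le_mul_of_nonneg_right (hB s (le_of_lt hs)) (hg0 _)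
            _ = B * ∫ s in Ioi T, g (s + v) := integral_const_mul B _
            _ ≤ B * I₁ := mul_le_mul_of_nonneg_left (mono1 v hv) hB0
  -- the contraction step for A₂
  have step : ∀ B : ℝ, 0 ≤ B → (∀ u, T ≤ u → ‖A₂ u‖ ≤ B) →
      ∀ u, T ≤ u → ‖A₂ u‖ ≤ I₂ ^ 2 + B * I₁ ^ 2 := by
    intro B hB0 hB u hu
    have hnc : ‖A₂ u‖ = ‖(starRingEnd ℂ) (A₂ u)‖ := (RCLike.norm_conj _).symm
    rw [hnc, hGLM1 u hu, norm_neg]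
    -- majorant
    have hMint : Integrable (fun s =>
        (g (s + T) ^ 2 + g (s + u) ^ 2) / 2 + B * I₁ * g (s + u)) :=
      (((hgsqy T).add (hgsqy u)).div_const 2).add ((hgy u).const_mul (B * I₁))
    calc ‖∫ s in Ioi T, A₁ s * f (s + u)‖
        ≤ ∫ s in Ioi T, ‖A₁ s * f (s + u)‖ := norm_integral_le_integral_norm _
      _ ≤ ∫ s in Ioi T,
            ((g (s + T) ^ 2 + g (s + u) ^ 2) / 2 + B * I₁ * g (s + u)) := by
          refine integral_mono_of_nonneg
            (Filter.Eventually.of_forall fun s => norm_nonneg _)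
            hMint.integrableOn
            (Filter.eventually_of_mem (self_mem_ae_restrict measurableSet_Ioi)
              fun s hs => ?_)
          have hs' : T ≤ s := le_of_lt hs
          have h1 : ‖A₁ s‖ ≤ g (s + T) + B * I₁ := bndA1 B hB0 hB s hs'
          have h2 : ‖A₁ s * f (s + u)‖ = ‖A₁ s‖ * g (s + u) := by rw [norm_mul, hfn]
          show ‖A₁ s * f (s + u)‖ ≤ (g (s + T) ^ 2 + g (s + u) ^ 2) / 2 + B * I₁ * g (s + u)
          rw [h2]
          have h3 : ‖A₁ s‖ * g (s + u) ≤ (g (s + T) + B * I₁) * g (s + u) :=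
            mul_le_mul_of_nonneg_right h1 (hg0 _)
          have h4 : g (s + T) * g (s + u) ≤ (g (s + T) ^ 2 + g (s + u) ^ 2) / 2 := by
            nlinarith [sq_nonneg (g (s + T) - g (s + u))]
          nlinarith [hg0 (s + u), hg0 (s + T)]
      _ = (∫ s in Ioi T, (g (s + T) ^ 2 + g (s + u) ^ 2) / 2)
            + ∫ s in Ioi T, B * I₁ * g (s + u) :=
          integral_add (((hgsqy T).add (hgsqy u)).div_const 2).integrableOn
            ((hgy u).const_mul (B * I₁)).integrableOn
      _ ≤ I₂ ^ 2 + B * I₁ ^ 2 := by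
          have e1 : (∫ s in Ioi T, (g (s + T) ^ 2 + g (s + u) ^ 2) / 2)
              = ((∫ s in Ioi T, g (s + T) ^ 2) + ∫ s in Ioi T, g (s + u) ^ 2) / 2 := by
            rw [integral_div, integral_add (hgsqy T).integrableOn (hgsqy u).integrableOn]
          have e2 : (∫ s in Ioi T, B * I₁ * g (s + u)) = B * I₁ * ∫ s in Ioi T, g (s + u) :=
            integral_const_mul _ _
          rw [e1, e2]
          have m1 := mono2 T le_rfl
          have m2 := mono2 u hu
          have m3 := mono1 u hu
          have hBI : 0 ≤ B * I₁ := mul_nonneg hB0 hI₁0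
          have m4 : B * I₁ * (∫ s in Ioi T, g (s + u)) ≤ B * I₁ * I₁ :=
            mul_le_mul_of_nonneg_left m3 hBI
          nlinarith
  -- iterate
  have main : ∀ n : ℕ, ∀ u, T ≤ u → ‖A₂ u‖ ≤ D + Cb * (I₁ ^ 2) ^ n := by
    intro n
    induction n with
    | zero => intro u _; simpa using le_trans (hCb u).2 (by linarith)
    | succ n ih =>
        intro u hu
        have hBn0 : 0 ≤ D + Cb * (I₁ ^ 2) ^ n := by positivity
        have h := step (D + Cb * (I₁ ^ 2) ^ n) hBn0 ih u hu
        have hDeq : D * (1 - I₁ ^ 2) = I₂ ^ 2 := div_mul_cancel₀ _ hden.ne'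
        calc ‖A₂ u‖ ≤ I₂ ^ 2 + (D + Cb * (I₁ ^ 2) ^ n) * I₁ ^ 2 := h
          _ = D + Cb * (I₁ ^ 2) ^ (n + 1) := by linear_combination -hDeq + Cb * I₁ ^ 2 * (I₁ ^ 2) ^ n - Cb * (I₁ ^ 2) ^ (n + 1)
  have hA2T : ‖A₂ T‖ ≤ D := by
    have hlim : Tendsto (fun n : ℕ => D + Cb * (I₁ ^ 2) ^ n) atTop (nhds (D + Cb * 0)) := by
      refine tendsto_const_nhds.add (Tendsto.const_mul Cb ?_)
      exact tendsto_pow_atTop_nhds_zero_of_lt_one (by positivity) (by nlinarith)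
    have := ge_of_tendsto' hlim (fun n => main n T le_rfl)
    simpa using this
  rw [hE]
  have h1 : (-2 * A₂ T).re ≤ 2 * ‖A₂ T‖ := by
    have : (-2 * A₂ T).re = -2 * (A₂ T).re := by simp
    rw [this]
    have habs : |(A₂ T).re| ≤ ‖A₂ T‖ := Complex.abs_re_le_norm _
    have := neg_abs_le ((A₂ T).re)
    nlinarith [norm_nonneg (A₂ T)]
  calc (-2 * A₂ T).re ≤ 2 * ‖A₂ T‖ := h1
    _ ≤ 2 * D := by linarith
    _ = 2 * I₂ ^ 2 / (1 - I₁ ^ 2) := by rw [hDdef]; ring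
end

section
/- Let f ∈ L^1 ∩ L^2 and fix t ∈ R. Define the operator K on functions over [t,∞) by (Kg)(y) = ∫_t^∞ (∫_t^∞ f*(y+s)f(s+x)ds) g(x) dx. Then K is bounded on L^2([t,∞)) with ‖K‖_{L^2} ≤ I₁(t)², where I₁(t) = ∫_{2t}^∞ |f(τ)| dτ. -/
open MeasureTheory Complex Set
open scoped ENNReal NNReal

/-- Translation for set lintegrals on half-lines. -/
lemma glm_shift_lintegral (φ : ℝ → ℝ≥0∞) (hφ : Measurable φ) (s t : ℝ) :
    ∫⁻ x in Ioi t, φ (s + x) = ∫⁻ u in Ioi (s + t), φ u := by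
  have hmp : MeasurePreserving (fun x : ℝ => s + x) volume volume :=
    measurePreserving_add_left volume s
  have hpre : (fun x : ℝ => s + x) ⁻¹' (Ioi (s + t)) = Ioi t := by
    ext x; simp [add_lt_add_iff_left]
  rw [← hpre, hmp.setLIntegral_comp_preimage measurableSet_Ioi hφ]

/-- Cauchy–Schwarz for lintegrals. -/
lemma glm_lintegral_cs {α : Type*} [MeasurableSpace α] (μ : Measure α) (u v : α → ℝ≥0∞)
    (hu : AEMeasurable u μ) (hv : AEMeasurable v μ) :
    (∫⁻ a, u a * v a ∂μ) ^ 2 ≤ (∫⁻ a, u a ^ 2 ∂μ) * (∫⁻ a, v a ^ 2 ∂μ) := by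
  have hpq : Real.HolderConjugate 2 2 := ⟨by norm_num, by norm_num, by norm_num⟩
  have h := ENNReal.lintegral_mul_le_Lp_mul_Lq μ hpq hu hv
  have h2 : ∀ w : α → ℝ≥0∞, (∫⁻ a, w a ^ (2 : ℝ) ∂μ) = ∫⁻ a, w a ^ 2 ∂μ := by
    intro w
    refine lintegral_congr fun a => ?_
    rw [← ENNReal.rpow_natCast (w a) 2]; norm_num
  calc (∫⁻ a, u a * v a ∂μ) ^ 2
      ≤ ((∫⁻ a, u a ^ (2:ℝ) ∂μ) ^ (1 / (2:ℝ)) * (∫⁻ a, v a ^ (2:ℝ) ∂μ) ^ (1 / (2:ℝ))) ^ 2 := by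
        exact pow_le_pow_left' h 2
    _ = (∫⁻ a, u a ^ 2 ∂μ) * (∫⁻ a, v a ^ 2 ∂μ) := by
        rw [mul_pow, ← ENNReal.rpow_natCast (_ ^ (1/(2:ℝ))) 2, ← ENNReal.rpow_natCast (_ ^ (1/(2:ℝ))) 2,
          ← ENNReal.rpow_mul, ← ENNReal.rpow_mul]
        norm_num

/-- Weighted Cauchy–Schwarz: `(∫ A b)² ≤ (∫ A) (∫ A b²)`. -/
lemma glm_lintegral_weighted_cs {α : Type*} [MeasurableSpace α] (μ : Measure α)
    (A b : α → ℝ≥0∞) (hA : AEMeasurable A μ) (hb : AEMeasurable b μ) :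
    (∫⁻ a, A a * b a ∂μ) ^ 2 ≤ (∫⁻ a, A a ∂μ) * (∫⁻ a, A a * b a ^ 2 ∂μ) := by
  have hsq : ∀ x : ℝ≥0∞, (x ^ (1/2 : ℝ)) ^ 2 = x := by
    intro x
    rw [← ENNReal.rpow_natCast (x ^ (1/2:ℝ)) 2, ← ENNReal.rpow_mul]
    norm_num
  have key : ∀ a, A a * b a = (A a ^ (1/2:ℝ)) * (A a ^ (1/2:ℝ) * b a) := by
    intro a
    rw [← mul_assoc, ← ENNReal.rpow_add_of_nonneg (1/2) (1/2) (by norm_num) (by norm_num)]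
    norm_num
  have h := glm_lintegral_cs μ (fun a => A a ^ (1/2:ℝ)) (fun a => A a ^ (1/2:ℝ) * b a)
    (hA.pow_const _) ((hA.pow_const _).mul hb)
  simp only [mul_pow, hsq] at h
  calc (∫⁻ a, A a * b a ∂μ) ^ 2 = (∫⁻ a, (A a ^ (1/2:ℝ)) * (A a ^ (1/2:ℝ) * b a) ∂μ) ^ 2 := by
        simp only [← key]
    _ ≤ (∫⁻ a, A a ∂μ) * (∫⁻ a, A a * b a ^ 2 ∂μ) := h

/-- Main lintegral estimate for measurable representatives. -/
lemma glm_aux (F G : ℝ → ℂ) (hF : Measurable F) (hG : Measurable G) (t : ℝ) :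
    ∫⁻ y in Ioi t, (∫⁻ x in Ioi t,
        (∫⁻ s in Ioi t, (‖F (y + s)‖₊ : ℝ≥0∞) * ‖F (s + x)‖₊) * ‖G x‖₊) ^ 2
      ≤ (∫⁻ τ in Ioi (2*t), (‖F τ‖₊ : ℝ≥0∞)) ^ 4 * ∫⁻ x in Ioi t, (‖G x‖₊ : ℝ≥0∞) ^ 2 := by
  set φ : ℝ → ℝ≥0∞ := fun u => (‖F u‖₊ : ℝ≥0∞) with hφdef
  have hφ : Measurable φ := hF.enorm
  set b : ℝ → ℝ≥0∞ := fun x => (‖G x‖₊ : ℝ≥0∞) with hbdef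
  have hb : Measurable b := hG.enorm
  set J : ℝ≥0∞ := ∫⁻ τ in Ioi (2*t), φ τ with hJdef
  set A : ℝ → ℝ → ℝ≥0∞ := fun y x => ∫⁻ s in Ioi t, φ (y + s) * φ (s + x) with hAdef
  -- measurability
  have hAy : ∀ y, Measurable fun x => A y x := by
    intro y
    exact Measurable.lintegral_prod_right
      (((hφ.comp (measurable_const.add measurable_snd)).mul
        (hφ.comp (measurable_snd.add measurable_fst))))
  have hAx : ∀ x, Measurable fun y => A y x := by
    intro x
    exact Measurable.lintegral_prod_right
      (((hφ.comp (measurable_fst.add measurable_snd)).mul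
        (hφ.comp (measurable_snd.add measurable_const))))
  have hA2 : Measurable fun p : ℝ × ℝ => A p.1 p.2 := by
    exact Measurable.lintegral_prod_right
      (((hφ.comp ((measurable_fst.comp measurable_fst).add measurable_snd)).mul
        (hφ.comp (measurable_snd.add (measurable_snd.comp measurable_fst)))))
  -- tail bounds via translation
  have htail : ∀ c : ℝ, t < c → (∫⁻ s in Ioi t, φ (c + s)) ≤ J := by
    intro c hc
    rw [glm_shift_lintegral φ hφ c t]
    exact lintegral_mono_set (Ioi_subset_Ioi (by linarith))
  -- row bound
  have hrow : ∀ y, t < y → (∫⁻ x in Ioi t, A y x) ≤ J * J := by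
    intro y hy
    have hswap : (∫⁻ x in Ioi t, A y x) = ∫⁻ s in Ioi t, ∫⁻ x in Ioi t, φ (y + s) * φ (s + x) := by
      exact lintegral_lintegral_swap
        (((hφ.comp (measurable_const.add measurable_snd)).mul
          (hφ.comp (measurable_snd.add measurable_fst))).aemeasurable)
    rw [hswap]
    calc ∫⁻ s in Ioi t, ∫⁻ x in Ioi t, φ (y + s) * φ (s + x)
        = ∫⁻ s in Ioi t, φ (y + s) * ∫⁻ x in Ioi t, φ (s + x) := by
          refine lintegral_congr fun s => ?_
          exact lintegral_const_mul _ (hφ.comp (measurable_const.add measurable_id))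
      _ ≤ ∫⁻ s in Ioi t, φ (y + s) * J := by
          refine setLIntegral_mono (hφ.comp (measurable_const.add measurable_id) |>.mul_const J)
            fun s hs => ?_
          exact mul_le_mul_right (htail s hs) _
      _ = (∫⁻ s in Ioi t, φ (y + s)) * J :=
          lintegral_mul_const _ (hφ.comp (measurable_const.add measurable_id))
      _ ≤ J * J := mul_le_mul_left (htail y hy) _
  -- column bound
  have hrow' : ∀ c : ℝ, t < c → (∫⁻ s in Ioi t, φ (s + c)) ≤ J := by
    intro c hc
    have : (∫⁻ s in Ioi t, φ (s + c)) = ∫⁻ s in Ioi t, φ (c + s) := by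
      refine lintegral_congr fun s => ?_
      rw [add_comm]
    rw [this]; exact htail c hc
  have hcol : ∀ x, t < x → (∫⁻ y in Ioi t, A y x) ≤ J * J := by
    intro x hx
    have hswap : (∫⁻ y in Ioi t, A y x) = ∫⁻ s in Ioi t, ∫⁻ y in Ioi t, φ (y + s) * φ (s + x) := by
      exact lintegral_lintegral_swap
        (((hφ.comp (measurable_fst.add measurable_snd)).mul
          (hφ.comp (measurable_snd.add measurable_const))).aemeasurable)
    rw [hswap]
    calc ∫⁻ s in Ioi t, ∫⁻ y in Ioi t, φ (y + s) * φ (s + x)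
        = ∫⁻ s in Ioi t, (∫⁻ y in Ioi t, φ (y + s)) * φ (s + x) := by
          refine lintegral_congr fun s => ?_
          exact lintegral_mul_const _ (hφ.comp (measurable_id.add measurable_const))
      _ ≤ ∫⁻ s in Ioi t, J * φ (s + x) := by
          refine setLIntegral_mono ((hφ.comp (measurable_id.add measurable_const)).const_mul J)
            fun s hs => ?_
          exact mul_le_mul_left (hrow' s hs) _
      _ = J * ∫⁻ s in Ioi t, φ (s + x) :=
          lintegral_const_mul _ (hφ.comp (measurable_id.add measurable_const))
      _ ≤ J * J := mul_le_mul_right (hrow' x hx) _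
  -- Cauchy–Schwarz step
  have step1 : ∀ y ∈ Ioi t, (∫⁻ x in Ioi t, A y x * b x) ^ 2
      ≤ (J * J) * ∫⁻ x in Ioi t, A y x * b x ^ 2 := by
    intro y hy
    calc (∫⁻ x in Ioi t, A y x * b x) ^ 2
        ≤ (∫⁻ x in Ioi t, A y x) * (∫⁻ x in Ioi t, A y x * b x ^ 2) :=
          glm_lintegral_weighted_cs _ _ _ (hAy y).aemeasurable hb.aemeasurable
      _ ≤ (J * J) * ∫⁻ x in Ioi t, A y x * b x ^ 2 :=
          mul_le_mul_left (hrow y hy) _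
  have hQmeas : Measurable fun y => ∫⁻ x in Ioi t, A y x * b x ^ 2 :=
    Measurable.lintegral_prod_right (hA2.mul ((hb.comp measurable_snd).pow_const 2))
  calc ∫⁻ y in Ioi t, (∫⁻ x in Ioi t, A y x * b x) ^ 2
      ≤ ∫⁻ y in Ioi t, (J * J) * ∫⁻ x in Ioi t, A y x * b x ^ 2 :=
        setLIntegral_mono (hQmeas.const_mul _) step1
    _ = (J * J) * ∫⁻ y in Ioi t, ∫⁻ x in Ioi t, A y x * b x ^ 2 :=
        lintegral_const_mul _ hQmeas
    _ = (J * J) * ∫⁻ x in Ioi t, ∫⁻ y in Ioi t, A y x * b x ^ 2 := by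
        rw [lintegral_lintegral_swap (hA2.mul ((hb.comp measurable_snd).pow_const 2)).aemeasurable]
    _ = (J * J) * ∫⁻ x in Ioi t, (∫⁻ y in Ioi t, A y x) * b x ^ 2 := by
        congr 1
        refine lintegral_congr fun x => ?_
        exact lintegral_mul_const _ (hAx x)
    _ ≤ (J * J) * ∫⁻ x in Ioi t, (J * J) * b x ^ 2 := by
        refine mul_le_mul_right ?_ _
        refine setLIntegral_mono ((measurable_const).mul (hb.pow_const 2)) fun x hx => ?_
        exact mul_le_mul_left (hcol x hx) _
    _ = J ^ 4 * ∫⁻ x in Ioi t, b x ^ 2 := by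
        rw [lintegral_const_mul _ (hb.pow_const 2), ← mul_assoc]
        ring_nf

/-- The Gelfand–Levitan–Marchenko operator
`(Kg)(y) = ∫_t^∞ (∫_t^∞ f*(y+s) f(s+x) ds) g(x) dx`, for `f ∈ L¹ ∩ L²` and fixed `t`, is
bounded on `L²([t,∞))` with norm at most `I₁(t)²`, where `I₁(t) = ∫_{2t}^∞ |f(τ)|dτ`;
equivalently `‖Kg‖₂² ≤ I₁(t)⁴ ‖g‖₂²`. -/
theorem glm_operator_L2_bound
    (f : ℝ → ℂ) (hf1 : Integrable f) (hf2 : MemLp f 2 volume)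
    (t : ℝ) (I₁ : ℝ) (hI₁ : I₁ = ∫ τ in Ioi (2 * t), ‖f τ‖)
    (g : ℝ → ℂ) (hg : MemLp g 2 volume)
    (Kg : ℝ → ℂ)
    (hKg : ∀ y, Kg y = ∫ x in Ioi t,
      (∫ s in Ioi t, (starRingEnd ℂ) (f (y + s)) * f (s + x)) * g x) :
    (∫ y in Ioi t, ‖Kg y‖ ^ 2) ≤ I₁ ^ 4 * ∫ x in Ioi t, ‖g x‖ ^ 2 := by
  have hI₁nn : 0 ≤ I₁ := hI₁ ▸ integral_nonneg fun τ => norm_nonneg _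
  have hgsq_nn : 0 ≤ ∫ x in Ioi t, ‖g x‖ ^ 2 :=
    integral_nonneg fun x => sq_nonneg _
  have hRHSnn : 0 ≤ I₁ ^ 4 * ∫ x in Ioi t, ‖g x‖ ^ 2 :=
    mul_nonneg (pow_nonneg hI₁nn 4) hgsq_nn
  -- measurable representatives
  set F : ℝ → ℂ := hf1.1.mk f with hFdef
  have hFmeas : Measurable F := hf1.1.stronglyMeasurable_mk.measurable
  have hfF : f =ᵐ[volume] F := hf1.1.ae_eq_mk
  set G : ℝ → ℂ := hg.1.mk g with hGdef
  have hGmeas : Measurable G := hg.1.stronglyMeasurable_mk.measurable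
  have hgG : g =ᵐ[volume] G := hg.1.ae_eq_mk
  -- rewrite Kg with representatives
  have hinner : ∀ y x : ℝ,
      (∫ s in Ioi t, (starRingEnd ℂ) (f (y + s)) * f (s + x))
        = ∫ s in Ioi t, (starRingEnd ℂ) (F (y + s)) * F (s + x) := by
    intro y x
    refine integral_congr_ae ?_
    have h1 : (fun s => f (y + s)) =ᵐ[volume] fun s => F (y + s) :=
      (measurePreserving_add_left volume y).quasiMeasurePreserving.ae_eq_comp hfF
    have h2 : (fun s => f (s + x)) =ᵐ[volume] fun s => F (s + x) :=
      (measurePreserving_add_right volume x).quasiMeasurePreserving.ae_eq_comp hfF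
    exact ae_restrict_of_ae ((h1.fun_comp (starRingEnd ℂ)).mul h2)
  have hKg' : ∀ y, Kg y = ∫ x in Ioi t,
      (∫ s in Ioi t, (starRingEnd ℂ) (F (y + s)) * F (s + x)) * G x := by
    intro y
    rw [hKg y]
    refine integral_congr_ae ?_
    filter_upwards [ae_restrict_of_ae hgG] with x hx
    rw [hinner y x, hx]
  -- pointwise enorm bound
  set A : ℝ → ℝ → ℝ≥0∞ :=
    fun y x => ∫⁻ s in Ioi t, (‖F (y + s)‖₊ : ℝ≥0∞) * ‖F (s + x)‖₊ with hAdef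
  have hptwise : ∀ y, (‖Kg y‖₊ : ℝ≥0∞) ≤ ∫⁻ x in Ioi t, A y x * ‖G x‖₊ := by
    intro y
    rw [hKg' y]
    refine le_trans (enorm_integral_le_lintegral_enorm _) ?_
    refine lintegral_mono fun x => ?_
    simp only [enorm_eq_nnnorm, nnnorm_mul, ENNReal.coe_mul]
    refine mul_le_mul_left ?_ _
    refine le_trans (enorm_integral_le_lintegral_enorm _) ?_
    refine lintegral_mono fun s => ?_
    simp only [enorm_eq_nnnorm, nnnorm_mul, ENNReal.coe_mul]
    have : ‖(starRingEnd ℂ) (F (y + s))‖₊ = ‖F (y + s)‖₊ := by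
      simp [nnnorm_star]
    rw [this]
  -- the lintegral bound
  set J : ℝ≥0∞ := ∫⁻ τ in Ioi (2 * t), (‖F τ‖₊ : ℝ≥0∞) with hJdef
  have hmain : ∫⁻ y in Ioi t, ((‖Kg y‖₊ : ℝ≥0∞)) ^ 2
      ≤ J ^ 4 * ∫⁻ x in Ioi t, (‖G x‖₊ : ℝ≥0∞) ^ 2 := by
    refine le_trans ?_ (glm_aux F G hFmeas hGmeas t)
    refine lintegral_mono fun y => ?_
    exact pow_le_pow_left' (hptwise y) 2
  -- identify J and the g-integral
  have hJ : J = ENNReal.ofReal I₁ := by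
    have he : ∫⁻ τ in Ioi (2 * t), (‖F τ‖₊ : ℝ≥0∞) = ∫⁻ τ in Ioi (2 * t), (‖f τ‖₊ : ℝ≥0∞) := by
      refine lintegral_congr_ae ?_
      filter_upwards [ae_restrict_of_ae hfF] with τ hτ
      rw [hτ]
    rw [hJdef, he, hI₁, ofReal_integral_norm_eq_lintegral_enorm hf1.integrableOn]
    simp only [enorm_eq_nnnorm]
  have hGsq : ∫⁻ x in Ioi t, (‖G x‖₊ : ℝ≥0∞) ^ 2
      = ENNReal.ofReal (∫ x in Ioi t, ‖g x‖ ^ 2) := by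
    have he : ∫⁻ x in Ioi t, (‖G x‖₊ : ℝ≥0∞) ^ 2 = ∫⁻ x in Ioi t, (‖g x‖₊ : ℝ≥0∞) ^ 2 := by
      refine lintegral_congr_ae ?_
      filter_upwards [ae_restrict_of_ae hgG] with x hx
      rw [hx]
    have hgint : Integrable (fun x => ‖g x‖ ^ 2) (volume.restrict (Ioi t)) := by
      have := hg.integrable_norm_rpow two_ne_zero ENNReal.ofNat_ne_top
      have h2 : (fun x => ‖g x‖ ^ ((2 : ℝ≥0∞).toReal)) = fun x => ‖g x‖ ^ 2 := by
        funext x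
        rw [ENNReal.toReal_ofNat, Real.rpow_two]
      rw [h2] at this
      exact this.integrableOn
    have he2 : ∫⁻ x in Ioi t, (‖g x‖₊ : ℝ≥0∞) ^ 2
        = ∫⁻ x in Ioi t, (‖(‖g x‖ ^ 2)‖₊ : ℝ≥0∞) := by
      refine lintegral_congr fun x => ?_
      have : ‖(‖g x‖ ^ 2)‖₊ = ‖g x‖₊ ^ 2 := by rw [nnnorm_pow, nnnorm_norm]
      rw [this, ENNReal.coe_pow]
    rw [he, he2]
    simp only [← enorm_eq_nnnorm]
    rw [← ofReal_integral_norm_eq_lintegral_enorm hgint]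
    congr 1
    refine integral_congr_ae (ae_of_all _ fun x => ?_)
    exact Real.norm_of_nonneg (sq_nonneg _)
  -- conclude
  rw [hJ, hGsq] at hmain
  by_cases hint : Integrable (fun y => ‖Kg y‖ ^ 2) (volume.restrict (Ioi t))
  · rw [integral_eq_lintegral_of_nonneg_ae (ae_of_all _ fun y => sq_nonneg _)
      hint.aestronglyMeasurable]
    have heq : ∫⁻ y in Ioi t, ENNReal.ofReal (‖Kg y‖ ^ 2)
        = ∫⁻ y in Ioi t, ((‖Kg y‖₊ : ℝ≥0∞)) ^ 2 := by
      refine lintegral_congr fun y => ?_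
      rw [ENNReal.ofReal_pow (norm_nonneg _), ofReal_norm_eq_enorm, enorm_eq_nnnorm]
    rw [heq]
    refine ENNReal.toReal_le_of_le_ofReal hRHSnn ?_
    refine le_trans hmain (le_of_eq ?_)
    rw [ENNReal.ofReal_mul (pow_nonneg hI₁nn 4), ENNReal.ofReal_pow hI₁nn]
  · rw [integral_undef hint]
    exact hRHSnn
end

section
/- Let p ∈ L^1 ∩ L^2 with supp p ⊂ [-2T₊,∞), and suppose the Gelfand–Levitan–Marchenko equations with input f(τ) = p(-τ) have a solution A₁(t,·), A₂(t,·) for each t. Then the recovered potential q(t) = -2A₁(t,t) satisfies supp q ⊂ (-∞, T₊]. More precisely, since supp f ⊂ (-∞, 2T₊], for each fixed t the solutions satisfy supp_y A_j(t,y) ⊂ [t, 2T₊ - t], hence A_j(t,·) ≡ 0 whenever t > T₊. -/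
open MeasureTheory Complex Set

/-- Let `p ∈ L¹ ∩ L²` with `supp p ⊆ [-2T₊,∞)`, and suppose the GLM
equations with input `f(τ) = p(-τ)` (so `supp f ⊆ (-∞, 2T₊]`) have a solution
`A₁(t,·), A₂(t,·)` for each `t` (with the convention `A_j(t,y) = 0` for `y < t`). Then
`supp_y A_j(t,·) ⊆ [t, 2T₊ - t]`, hence `A_j(t,·) ≡ 0` whenever `t > T₊`, and the
recovered potential `q(t) = -2A₁(t,t)` satisfies `supp q ⊆ (-∞, T₊]`. -/
theorem glm_one_sided_support
    (Tp : ℝ)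
    (p : ℝ → ℂ) (hp1 : Integrable p) (hp2 : MemLp p 2 volume)
    (hpsupp : Function.support p ⊆ Ici (-(2 * Tp)))
    (f : ℝ → ℂ) (hf : ∀ τ, f τ = p (-τ))
    (A₁ A₂ : ℝ → ℝ → ℂ)
    (hconv : ∀ t y, y < t → A₁ t y = 0 ∧ A₂ t y = 0)
    (hGLM1 : ∀ t y, t ≤ y →
      (starRingEnd ℂ) (A₂ t y) = -∫ s in Ioc t (2 * Tp - y), A₁ t s * f (s + y))
    (hGLM2 : ∀ t y, t ≤ y →
      (starRingEnd ℂ) (A₁ t y) = f (t + y) + ∫ s in Ioc t (2 * Tp - y), A₂ t s * f (s + y))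
    (q : ℝ → ℂ) (hq : ∀ t, q t = -2 * A₁ t t) :
    (∀ t, Function.support (A₁ t) ⊆ Icc t (2 * Tp - t)
        ∧ Function.support (A₂ t) ⊆ Icc t (2 * Tp - t))
    ∧ (∀ t, Tp < t → ∀ y, A₁ t y = 0 ∧ A₂ t y = 0)
    ∧ Function.support q ⊆ Iic Tp := by
  have hfzero : ∀ τ, 2 * Tp < τ → f τ = 0 := by
    intro τ hτ
    rw [hf]
    by_contra h
    have := hpsupp h
    simp only [mem_Ici] at this
    linarith
  -- main zero lemma for y in the "upper" region
  have hzero : ∀ t y, t ≤ y → 2 * Tp - t < y → A₁ t y = 0 ∧ A₂ t y = 0 := by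
    intro t y hty hy
    have hempty : Ioc t (2 * Tp - y) = ∅ := by
      apply Ioc_eq_empty
      intro h
      linarith
    have h1 := hGLM1 t y hty
    have h2 := hGLM2 t y hty
    rw [hempty] at h1 h2
    simp only [Measure.restrict_empty, integral_zero_measure] at h1 h2
    have hf0 : f (t + y) = 0 := hfzero _ (by linarith)
    rw [hf0] at h2
    constructor
    · have : (starRingEnd ℂ) (A₁ t y) = 0 := by rw [h2]; ring
      simpa using congrArg (starRingEnd ℂ) this
    · have : (starRingEnd ℂ) (A₂ t y) = 0 := by rw [h1]; ring
      simpa using congrArg (starRingEnd ℂ) this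
  have hsupp : ∀ t, Function.support (A₁ t) ⊆ Icc t (2 * Tp - t)
      ∧ Function.support (A₂ t) ⊆ Icc t (2 * Tp - t) := by
    intro t
    constructor <;>
    · intro y hy
      by_contra hmem
      simp only [mem_Icc, not_and_or, not_le] at hmem
      rcases hmem with h | h
      · first
        | exact hy ((hconv t y h).1)
        | exact hy ((hconv t y h).2)
      · rcases le_or_gt t y with hle | hlt
        · first
          | exact hy ((hzero t y hle h).1)
          | exact hy ((hzero t y hle h).2)
        · first
          | exact hy ((hconv t y hlt).1)
          | exact hy ((hconv t y hlt).2)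
  refine ⟨hsupp, ?_, ?_⟩
  · intro t ht y
    rcases lt_or_ge y t with h | h
    · exact hconv t y h
    · exact hzero t y h (by linarith)
  · intro t ht
    simp only [mem_Iic]
    by_contra hc
    push_neg at hc
    have := (hsupp t).1 (show t ∈ Function.support (A₁ t) by
      intro h0
      apply ht
      rw [hq, h0]; ring)
    simp only [mem_Icc] at this
    linarith
end

section
/- Let G be the 2(m+1) × 2(m+1) block matrix G = [[I, -Γ†],[Γ, I]] where Γ is an (m+1)×(m+1) lower-triangular Toeplitz matrix with complex entries and I is the identity. If (u,v)ᵀ solves G(u,v)ᵀ = e₁ (first standard basis vector), then (-v‡, u‡)ᵀ solves G(-v‡,u‡)ᵀ = e_{2m+2} (last standard basis vector), where x‡ denotes the vector x with entries reversed in order and complex-conjugated. -/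
/-!
Reversing and conjugating a vector, `x‡ i = star (x (rev i))`, intertwines `Γ` with `Γᴴ`
(`Γᴴ x‡ = (Γ x)‡` and `Γ x‡ = (Γᴴ x)‡`) as soon as `Γ` is persymmetric, which every Toeplitz
matrix is. Hence if `G (u, v) = (a, b)` then `G (-v‡, u‡) = (-b‡, a‡)`, and `(e₀, 0)` is sent
to `(0, e₀‡) = (0, e_last)`.
-/

open Matrix

namespace Matrix

/-- `J A J = Aᵀ` for the exchange matrix `J`. -/
def IsPersymmetric {α : Type*} {n : ℕ} (A : Matrix (Fin n) (Fin n) α) : Prop :=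
  ∀ i j, A (Fin.rev i) (Fin.rev j) = A j i

theorem isPersymmetric_of_toeplitz {α : Type*} {n : ℕ} {A : Matrix (Fin n) (Fin n) α}
    (f : ℤ → α) (hA : ∀ j k, A j k = f ((j : ℤ) - k)) : A.IsPersymmetric := by
  intro i j
  rw [hA, hA]
  congr 1
  simp only [Fin.val_rev]
  omega

theorem IsPersymmetric.conjTranspose {α : Type*} [Star α] {n : ℕ}
    {A : Matrix (Fin n) (Fin n) α} (hA : A.IsPersymmetric) : Aᴴ.IsPersymmetric := fun i j => by
  rw [conjTranspose_apply, conjTranspose_apply, hA j i]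

end Matrix

def revStar {R : Type*} [Star R] {n : ℕ} (x : Fin n → R) : Fin n → R :=
  fun i => star (x (Fin.rev i))

@[simp]
theorem revStar_zero {R : Type*} [AddMonoid R] [StarAddMonoid R] {n : ℕ} :
    revStar (0 : Fin n → R) = 0 := by
  ext i
  simp [revStar]

section

variable {R : Type*} [CommSemiring R] [StarRing R] {n : ℕ}

theorem revStar_single_zero :
    revStar (Pi.single 0 1 : Fin (n + 1) → R) = Pi.single (Fin.last n) 1 := by
  ext i
  simp only [revStar, Pi.single_apply, Fin.rev_eq_iff, Fin.rev_zero]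
  split_ifs <;> simp

theorem conjTranspose_mulVec_revStar {A : Matrix (Fin n) (Fin n) R} (hA : A.IsPersymmetric)
    (x : Fin n → R) : Aᴴ *ᵥ revStar x = revStar (A *ᵥ x) := by
  ext i
  simp only [revStar, mulVec, dotProduct, conjTranspose_apply, star_sum, star_mul', ← hA i]
  exact Fintype.sum_equiv Fin.revPerm _ _ fun j => by simp

theorem mulVec_revStar {A : Matrix (Fin n) (Fin n) R} (hA : A.IsPersymmetric)
    (x : Fin n → R) : A *ᵥ revStar x = revStar (Aᴴ *ᵥ x) := by
  simpa using conjTranspose_mulVec_revStar hA.conjTranspose x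

end

theorem fromBlocks_mulVec_revStar {R : Type*} [CommRing R] [StarRing R] {n : ℕ}
    {Γ : Matrix (Fin n) (Fin n) R} (hΓ : Γ.IsPersymmetric) {u v a b : Fin n → R}
    (h : fromBlocks 1 (-Γᴴ) Γ 1 *ᵥ Sum.elim u v = Sum.elim a b) :
    fromBlocks 1 (-Γᴴ) Γ 1 *ᵥ Sum.elim (-revStar v) (revStar u) =
      Sum.elim (-revStar b) (revStar a) := by
  simp only [fromBlocks_mulVec, Sum.elim_comp_inl, Sum.elim_comp_inr, one_mulVec, neg_mulVec,
    mulVec_neg, Sum.elim_eq_iff] at h ⊢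
  rw [← h.1, ← h.2, conjTranspose_mulVec_revStar hΓ, mulVec_revStar hΓ]
  constructor <;> ext i <;> simp [revStar, add_comm]

/-- Persymmetry of the block-Toeplitz GLM system matrix. Let
`G = [[I, -Γ†],[Γ, I]]` with `Γ` a lower-triangular Toeplitz `(m+1)×(m+1)` complex matrix.
If `(u,v)ᵀ` solves `G(u,v)ᵀ = e₁`, then `(-v‡, u‡)ᵀ` solves `G(-v‡,u‡)ᵀ = e_last`, where
`x‡` reverses the order of entries and conjugates them. -/
theorem toeplitz_block_persymmetry
    (m : ℕ) (ω : ℕ → ℂ)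
    (Γ : Matrix (Fin (m + 1)) (Fin (m + 1)) ℂ)
    (hΓ : ∀ j k : Fin (m + 1), Γ j k = if (k : ℕ) ≤ (j : ℕ) then ω ((j : ℕ) - (k : ℕ)) else 0)
    (G : Matrix (Fin (m + 1) ⊕ Fin (m + 1)) (Fin (m + 1) ⊕ Fin (m + 1)) ℂ)
    (hG : G = Matrix.fromBlocks 1 (-Γ.conjTranspose) Γ 1)
    (u v : Fin (m + 1) → ℂ)
    (huv : G.mulVec (Sum.elim u v) = Pi.single (Sum.inl 0) 1) :
    G.mulVec (Sum.elim (fun i => -((starRingEnd ℂ) (v (Fin.rev i))))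
        (fun i => (starRingEnd ℂ) (u (Fin.rev i))))
      = Pi.single (Sum.inr (Fin.last m)) 1 := by
  subst hG
  have hper : Γ.IsPersymmetric :=
    isPersymmetric_of_toeplitz (fun z => if 0 ≤ z then ω z.toNat else 0) fun j k => by
      rw [hΓ]
      split_ifs <;> first | omega | (congr 1; omega) | rfl
  rw [← Sum.elim_single_zero] at huv
  calc _ = Sum.elim (-revStar 0) (revStar (Pi.single 0 1)) :=
        fromBlocks_mulVec_revStar hper huv
    _ = _ := by rw [revStar_zero, neg_zero, revStar_single_zero, Sum.elim_zero_single]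
end

section
/- Consider the discrete Zakharov–Shabat transfer matrix M_{n+1}(z²) = Θ_{n+1}^{-1} [[1+z²Q_{n+1}R_n, z²Q_{n+1}+Q_n],[R_{n+1}+z²R_n, R_{n+1}Q_n+z²]] with Θ_n = 1 - Q_nR_n, R_n = -Q_n*, |Q_n| < 1, and the polynomial recursion P_{n+1}(z²) = M_{n+1}(z²)P_n(z²) starting from P_0 = (1,0)ᵀ with Q_0 = 0. Then the constant coefficient of the first component satisfies P^{(n+1)}_{1,0} = Θ_{n+1}^{-1} Π_{k=1}^n (1+Q_kR_k)/(1-Q_kR_k) > 0, and the samples can be recovered by layer-peeling: R_{n+1} = P^{(n+1)}_{2,0}/P^{(n+1)}_{1,0} and R_n = χ/(1+√(1+|χ|²)) with χ = (P^{(n+1)}_{2,1} - R_{n+1}P^{(n+1)}_{1,1})/(P^{(n+1)}_{1,0} - Q_{n+1}P^{(n+1)}_{2,0}). -/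
/-!
Since `R = -Q̄`, the products `QₖRₖ = -|Qₖ|²` are real, so `Θₖ = 1 + |Qₖ|² > 0` and
`1 + QₖRₖ = 1 - |Qₖ|² > 0`. Comparing constant coefficients in the recursion gives
`P₂⁽ⁿ⁾₀ = Rₙ P₁⁽ⁿ⁾₀` (at `n = 0` because `Q₀ = 0`), hence
`P₁⁽ⁿ⁺¹⁾₀ = Θₙ₊₁⁻¹ (1 + QₙRₙ) P₁⁽ⁿ⁾₀`, a telescoping product of positive reals. In the
first-order coefficients the factor `Θₙ₊₁ = 1 - Qₙ₊₁Rₙ₊₁` cancels and leaves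
`χ = 2Rₙ / (1 - |Rₙ|²)`, which `r ↦ χ / (1 + √(1 + |χ|²))` inverts because
`1 + |χ|² = ((1 + |r|²) / (1 - |r|²))²`.
-/

open Polynomial Finset
open scoped ComplexOrder ComplexConjugate

section TransferCoefficients

variable {S : Type*} [CommSemiring S] (c q q' r r' : S) (p₁ p₂ : S[X])

theorem coeff_zero_transfer_fst :
    (C c * ((1 + X * C (q' * r)) * p₁ + (X * C q' + C q) * p₂)).coeff 0
      = c * (p₁.coeff 0 + q * p₂.coeff 0) := by
  simp [mul_coeff_zero]

theorem coeff_one_transfer_fst :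
    (C c * ((1 + X * C (q' * r)) * p₁ + (X * C q' + C q) * p₂)).coeff 1
      = c * (p₁.coeff 1 + q' * r * p₁.coeff 0 + (q' * p₂.coeff 0 + q * p₂.coeff 1)) := by
  simp only [coeff_C_mul, coeff_add, add_mul, one_mul, mul_assoc X, coeff_X_mul]

theorem coeff_zero_transfer_snd :
    (C c * ((C r' + X * C r) * p₁ + (C (r' * q) + X) * p₂)).coeff 0
      = c * (r' * (p₁.coeff 0 + q * p₂.coeff 0)) := by
  simp only [coeff_add, mul_coeff_zero, coeff_C_zero, coeff_X_zero, add_zero]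
  ring

theorem coeff_one_transfer_snd :
    (C c * ((C r' + X * C r) * p₁ + (C (r' * q) + X) * p₂)).coeff 1
      = c * (r' * p₁.coeff 1 + r * p₁.coeff 0 + (r' * q * p₂.coeff 1 + p₂.coeff 0)) := by
  simp only [coeff_C_mul, coeff_add, add_mul, mul_assoc X, coeff_X_mul]

end TransferCoefficients

structure IsZSTransferRecursion {K : Type*} [Field K] (Q R Θ : ℕ → K) (P₁ P₂ : ℕ → K[X]) :
    Prop where
  fst : ∀ n, P₁ (n + 1) = C (Θ (n + 1))⁻¹ *
    ((1 + X * C (Q (n + 1) * R n)) * P₁ n + (X * C (Q (n + 1)) + C (Q n)) * P₂ n)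
  snd : ∀ n, P₂ (n + 1) = C (Θ (n + 1))⁻¹ *
    ((C (R (n + 1)) + X * C (R n)) * P₁ n + (C (R (n + 1) * Q n) + X) * P₂ n)

namespace IsZSTransferRecursion

variable {K : Type*} [Field K] {Q R Θ : ℕ → K} {P₁ P₂ : ℕ → K[X]}

theorem coeff_zero_fst_succ (h : IsZSTransferRecursion Q R Θ P₁ P₂) (n : ℕ) :
    (P₁ (n + 1)).coeff 0 = (Θ (n + 1))⁻¹ * ((P₁ n).coeff 0 + Q n * (P₂ n).coeff 0) := by
  rw [h.fst, coeff_zero_transfer_fst]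

theorem coeff_zero_snd_succ (h : IsZSTransferRecursion Q R Θ P₁ P₂) (n : ℕ) :
    (P₂ (n + 1)).coeff 0 = R (n + 1) * (P₁ (n + 1)).coeff 0 := by
  rw [h.snd, coeff_zero_transfer_snd, h.coeff_zero_fst_succ]
  ring

theorem coeff_zero_snd (h : IsZSTransferRecursion Q R Θ P₁ P₂)
    (h₀ : (P₂ 0).coeff 0 = R 0 * (P₁ 0).coeff 0) (n : ℕ) :
    (P₂ n).coeff 0 = R n * (P₁ n).coeff 0 := by
  cases n with
  | zero => exact h₀
  | succ n => exact h.coeff_zero_snd_succ n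

theorem coeff_zero_fst_succ_eq_prod (h : IsZSTransferRecursion Q R Θ P₁ P₂)
    (hΘ : ∀ n, Θ n = 1 - Q n * R n) (h₁ : (P₁ 0).coeff 0 = 1) (h₂ : (P₂ 0).coeff 0 = 0)
    (n : ℕ) :
    (P₁ (n + 1)).coeff 0
      = (Θ (n + 1))⁻¹ * ∏ k ∈ Icc 1 n, (1 + Q k * R k) / (1 - Q k * R k) := by
  induction n with
  | zero => simp [h.coeff_zero_fst_succ, h₁, h₂]
  | succ m ih =>
    rw [h.coeff_zero_fst_succ, h.coeff_zero_snd_succ, ih,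
      prod_Icc_succ_top (Nat.le_add_left 1 m), hΘ (m + 1), div_eq_mul_inv]
    ring

theorem coeff_zero_fst_sub (h : IsZSTransferRecursion Q R Θ P₁ P₂) {n : ℕ}
    (hΘ : Θ (n + 1) = 1 - Q (n + 1) * R (n + 1)) (hΘ₀ : Θ (n + 1) ≠ 0) :
    (P₁ (n + 1)).coeff 0 - Q (n + 1) * (P₂ (n + 1)).coeff 0
      = (P₁ n).coeff 0 + Q n * (P₂ n).coeff 0 := by
  rw [h.coeff_zero_snd_succ, h.coeff_zero_fst_succ]
  calc _ = (Θ (n + 1))⁻¹ * (Θ (n + 1) * ((P₁ n).coeff 0 + Q n * (P₂ n).coeff 0)) := by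
        rw [hΘ]; ring
    _ = _ := inv_mul_cancel_left₀ hΘ₀ _

theorem coeff_one_snd_sub (h : IsZSTransferRecursion Q R Θ P₁ P₂) {n : ℕ}
    (hΘ : Θ (n + 1) = 1 - Q (n + 1) * R (n + 1)) (hΘ₀ : Θ (n + 1) ≠ 0) :
    (P₂ (n + 1)).coeff 1 - R (n + 1) * (P₁ (n + 1)).coeff 1
      = R n * (P₁ n).coeff 0 + (P₂ n).coeff 0 := by
  rw [h.fst, h.snd, coeff_one_transfer_fst, coeff_one_transfer_snd]
  calc _ = (Θ (n + 1))⁻¹ * (Θ (n + 1) * (R n * (P₁ n).coeff 0 + (P₂ n).coeff 0)) := by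
        rw [hΘ]; ring
    _ = _ := inv_mul_cancel_left₀ hΘ₀ _

theorem coeff_ratio_eq (h : IsZSTransferRecursion Q R Θ P₁ P₂)
    (hb : ∀ n, (P₂ n).coeff 0 = R n * (P₁ n).coeff 0) {n : ℕ}
    (hΘ : Θ (n + 1) = 1 - Q (n + 1) * R (n + 1)) (hΘ₀ : Θ (n + 1) ≠ 0)
    (ha : (P₁ n).coeff 0 ≠ 0) :
    ((P₂ (n + 1)).coeff 1 - R (n + 1) * (P₁ (n + 1)).coeff 1)
        / ((P₁ (n + 1)).coeff 0 - Q (n + 1) * (P₂ (n + 1)).coeff 0)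
      = 2 * R n / (1 + Q n * R n) := by
  rw [h.coeff_one_snd_sub hΘ hΘ₀, h.coeff_zero_fst_sub hΘ hΘ₀, hb]
  calc _ = 2 * R n * (P₁ n).coeff 0 / ((1 + Q n * R n) * (P₁ n).coeff 0) := by ring
    _ = _ := mul_div_mul_right _ _ ha

end IsZSTransferRecursion

namespace Complex

theorem mul_neg_conj_self (z : ℂ) : z * -conj z = -(‖z‖ : ℂ) ^ 2 := by
  rw [mul_neg, mul_conj']

theorem one_sub_mul_neg_conj_self_pos (z : ℂ) : 0 < 1 - z * -conj z := by
  rw [mul_neg_conj_self, sub_neg_eq_add]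
  exact_mod_cast (by positivity : (0 : ℝ) < 1 + ‖z‖ ^ 2)

theorem one_add_mul_neg_conj_self_pos {z : ℂ} (hz : ‖z‖ < 1) : 0 < 1 + z * -conj z := by
  rw [mul_neg_conj_self, ← sub_eq_add_neg]
  have : (0 : ℝ) < 1 - ‖z‖ ^ 2 := by nlinarith [norm_nonneg z]
  exact_mod_cast this

theorem eq_div_one_add_sqrt_one_add_norm_sq {r χ : ℂ} (hr : ‖r‖ < 1)
    (hχ : χ = 2 * r / (1 - ‖r‖ ^ 2 : ℝ)) :
    r = χ / (1 + (Real.sqrt (1 + ‖χ‖ ^ 2) : ℂ)) := by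
  have hs : 0 < 1 - ‖r‖ ^ 2 := by nlinarith [norm_nonneg r]
  have hχ_norm : ‖χ‖ = 2 * ‖r‖ / (1 - ‖r‖ ^ 2) := by
    rw [hχ, norm_div, norm_mul, norm_real, Real.norm_of_nonneg hs.le, Complex.norm_two]
  have hsqrt : Real.sqrt (1 + ‖χ‖ ^ 2) = (1 + ‖r‖ ^ 2) / (1 - ‖r‖ ^ 2) := by
    rw [Real.sqrt_eq_iff_eq_sq (by positivity) (by positivity), hχ_norm]
    field_simp
    ring
  rw [hsqrt, hχ]
  have : ((1 - ‖r‖ ^ 2 : ℝ) : ℂ) ≠ 0 := by exact_mod_cast hs.ne'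
  push_cast at this ⊢
  field_simp
  ring

end Complex

/-- Discrete Zakharov–Shabat layer peeling. With `R_n = -Q_n*`, `|Q_n| < 1`,
`Q₀ = 0`, `Θ_n = 1-Q_nR_n`, and the polynomial recursion (in `w = z²`)
`P⁽ⁿ⁺¹⁾ = Θ_{n+1}⁻¹ [[1+wQ_{n+1}R_n, wQ_{n+1}+Q_n],[R_{n+1}+wR_n, R_{n+1}Q_n+w]] P⁽ⁿ⁾`
from `P⁽⁰⁾ = (1,0)ᵀ`, the constant coefficient satisfies
`P⁽ⁿ⁺¹⁾₁,₀ = Θ_{n+1}⁻¹ Π_{k=1}^n (1+Q_kR_k)/(1-Q_kR_k) > 0`, and the layer-peeling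
recovery formulas hold: `R_{n+1} = P⁽ⁿ⁺¹⁾₂,₀/P⁽ⁿ⁺¹⁾₁,₀` and
`R_n = χ/(1+√(1+|χ|²))` with
`χ = (P⁽ⁿ⁺¹⁾₂,₁ - R_{n+1}P⁽ⁿ⁺¹⁾₁,₁)/(P⁽ⁿ⁺¹⁾₁,₀ - Q_{n+1}P⁽ⁿ⁺¹⁾₂,₀)`. -/
theorem layer_peeling_trapezoidal
    (Q R : ℕ → ℂ) (Θ : ℕ → ℂ)
    (hR : ∀ n, R n = -(starRingEnd ℂ) (Q n))
    (hQlt : ∀ n, ‖Q n‖ < 1) (hQ0 : Q 0 = 0)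
    (hΘ : ∀ n, Θ n = 1 - Q n * R n)
    (P₁ P₂ : ℕ → Polynomial ℂ)
    (hP0 : P₁ 0 = 1 ∧ P₂ 0 = 0)
    (hrec1 : ∀ n, P₁ (n + 1) = Polynomial.C (Θ (n + 1))⁻¹ *
      ((1 + Polynomial.X * Polynomial.C (Q (n + 1) * R n)) * P₁ n
        + (Polynomial.X * Polynomial.C (Q (n + 1)) + Polynomial.C (Q n)) * P₂ n))
    (hrec2 : ∀ n, P₂ (n + 1) = Polynomial.C (Θ (n + 1))⁻¹ *
      ((Polynomial.C (R (n + 1)) + Polynomial.X * Polynomial.C (R n)) * P₁ n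
        + (Polynomial.C (R (n + 1) * Q n) + Polynomial.X) * P₂ n)) :
    ∀ n : ℕ,
      (P₁ (n + 1)).coeff 0
          = (Θ (n + 1))⁻¹ * ∏ k ∈ Finset.Icc 1 n, (1 + Q k * R k) / (1 - Q k * R k)
      ∧ 0 < ((P₁ (n + 1)).coeff 0).re ∧ ((P₁ (n + 1)).coeff 0).im = 0
      ∧ R (n + 1) = (P₂ (n + 1)).coeff 0 / (P₁ (n + 1)).coeff 0
      ∧ ∀ χ : ℂ, χ = ((P₂ (n + 1)).coeff 1 - R (n + 1) * (P₁ (n + 1)).coeff 1)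
            / ((P₁ (n + 1)).coeff 0 - Q (n + 1) * (P₂ (n + 1)).coeff 0) →
          R n = χ / (1 + (Real.sqrt (1 + ‖χ‖ ^ 2) : ℂ)) := by
  obtain ⟨hP₁0, hP₂0⟩ := hP0
  have h : IsZSTransferRecursion Q R Θ P₁ P₂ := ⟨hrec1, hrec2⟩
  have hΘpos (k : ℕ) : 0 < Θ k := by
    rw [hΘ, hR]; exact (Q k).one_sub_mul_neg_conj_self_pos
  have hΘ₀ (k : ℕ) : Θ k ≠ 0 := (hΘpos k).ne'
  have hprod := h.coeff_zero_fst_succ_eq_prod hΘ (by simp [hP₁0]) (by simp [hP₂0])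
  have hpos (n : ℕ) : 0 < (P₁ (n + 1)).coeff 0 := by
    rw [hprod]
    refine mul_pos (inv_pos.2 (hΘpos _)) (prod_pos fun k _ => div_pos ?_ (hΘ k ▸ hΘpos k))
    rw [hR]; exact Complex.one_add_mul_neg_conj_self_pos (hQlt k)
  have ha₀ (n : ℕ) : (P₁ n).coeff 0 ≠ 0 := by
    cases n with
    | zero => simp [hP₁0]
    | succ n => exact (hpos n).ne'
  have hb := h.coeff_zero_snd (by simp [hP₂0, hR, hQ0])
  intro n
  obtain ⟨hre, him⟩ := Complex.pos_iff.1 (hpos n)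
  refine ⟨hprod n, hre, him.symm, ?_, fun χ hχ => ?_⟩
  · rw [h.coeff_zero_snd_succ, mul_div_cancel_right₀ _ (ha₀ _)]
  · have hnorm : ‖R n‖ = ‖Q n‖ := by rw [hR, norm_neg, Complex.norm_conj]
    refine Complex.eq_div_one_add_sqrt_one_add_norm_sq (hnorm ▸ hQlt n) ?_
    rw [hχ, h.coeff_ratio_eq hb (hΘ _) (hΘ₀ _) (ha₀ n), hR n, Complex.mul_neg_conj_self, ← hR,
      hnorm]
    push_cast
    ring
end
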